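/- arXiv:1212.0115 — 7 statements merged into one kernel-verified Lean document; each statement's English description precedes it below -/
import Mathlib

section
/- Let G ⊊ ℝⁿ be a domain (nonempty open connected proper subset), let z₀ ∈ G, and let z ∈ ∂G satisfy δ_G(z₀) = |z₀ − z|. Then for all points u, v on the half-open segment [z₀, z) (so u, v ∈ G), one has k_G(u,v) = j_G(u,v) = |log(δ_G(u)/δ_G(v))| = |log((δ_G(z₀) − |z₀−u|)/(δ_G(z₀) − |z₀−v|))|. -/
open Set Metric MeasureTheory AffineMap

/-- The Euclidean distance from a point to the boundary of `G`. -/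
noncomputable def bdist {n : ℕ} (G : Set (EuclideanSpace ℝ (Fin n)))
    (x : EuclideanSpace ℝ (Fin n)) : ℝ :=
  Metric.infDist x (frontier G)

/-- The quasihyperbolic length of a path `γ` (parametrized on `[0,1]`) in `G`. -/
noncomputable def qhLength {n : ℕ} (G : Set (EuclideanSpace ℝ (Fin n)))
    (γ : ℝ → EuclideanSpace ℝ (Fin n)) : ℝ :=
  ∫ t in (0:ℝ)..1, ‖deriv γ t‖ / bdist G (γ t)

/-- The quasihyperbolic metric of `G`: the infimum of quasihyperbolic lengths of
paths joining `x` and `y` inside `G`. -/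
noncomputable def qhDist {n : ℕ} (G : Set (EuclideanSpace ℝ (Fin n)))
    (x y : EuclideanSpace ℝ (Fin n)) : ℝ :=
  ⨅ γ : {γ : ℝ → EuclideanSpace ℝ (Fin n) // γ 0 = x ∧ γ 1 = y ∧
      (∀ t ∈ Set.Icc (0:ℝ) 1, γ t ∈ G) ∧ ContDiffOn ℝ 1 γ (Set.Icc 0 1)},
    qhLength G γ.1

/-- The distance ratio metric of `G`. -/
noncomputable def jDist {n : ℕ} (G : Set (EuclideanSpace ℝ (Fin n)))
    (x y : EuclideanSpace ℝ (Fin n)) : ℝ :=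
  Real.log (1 + dist x y / min (bdist G x) (bdist G y))

/-!
Along the segment from `z₀` to a nearest boundary point `z` the boundary distance decreases
linearly, `δ(lineMap z₀ z c) = (1 - c) δ(z₀)`: it is at most the distance to `z` and, being
1-Lipschitz, at least `δ(z₀) - c |z₀ - z|`. Hence the quasihyperbolic length of the straight
path from `u` to `v` is `|log (δ u / δ v)|`, and so is `j_G(u, v)`, since `|u - v| = |δ u - δ v|`.
On the other hand `j_G` of the endpoints is a lower bound for the quasihyperbolic length of
every path.
-/

section BoundaryDistance

variable {n : ℕ} {G : Set (EuclideanSpace ℝ (Fin n))}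

lemma bdist_pos (hGo : IsOpen G) (hne : (frontier G).Nonempty) {x : EuclideanSpace ℝ (Fin n)}
    (hx : x ∈ G) : 0 < bdist G x :=
  (isClosed_frontier.notMem_iff_infDist_pos hne).1 fun h => (hGo.frontier_eq ▸ h).2 hx

lemma ball_bdist_subset (hGo : IsOpen G) {x : EuclideanSpace ℝ (Fin n)} (hx : x ∈ G) :
    ball x (bdist G x) ⊆ G := by
  intro w hw
  have hx' : x ∈ ball x (bdist G x) := mem_ball_self (dist_nonneg.trans_lt hw)
  refine (convex_ball x _).isPreconnected.subset_of_closure_inter_subset hGo ⟨x, hx', hx⟩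
    ?_ hw
  rintro y ⟨hyc, hyb⟩
  by_contra hyG
  exact ball_infDist_subset_compl hyb ⟨hyc, by rwa [hGo.interior_eq]⟩

variable {z₀ z : EuclideanSpace ℝ (Fin n)}

lemma bdist_lineMap (hz : z ∈ frontier G) (hd : bdist G z₀ = dist z₀ z) {c : ℝ}
    (hc : c ∈ Icc (0 : ℝ) 1) : bdist G (lineMap z₀ z c) = (1 - c) * bdist G z₀ := by
  apply le_antisymm
  · calc bdist G (lineMap z₀ z c) ≤ dist (lineMap z₀ z c) z := infDist_le_dist_of_mem hz
      _ = (1 - c) * bdist G z₀ := by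
        rw [dist_lineMap_right, hd, Real.norm_of_nonneg (sub_nonneg.2 hc.2)]
  · have h := infDist_le_infDist_add_dist (x := z₀) (y := lineMap z₀ z c) (s := frontier G)
    rw [dist_left_lineMap, Real.norm_of_nonneg hc.1, ← hd] at h
    unfold bdist at *
    linarith

lemma bdist_lineMap_eq_sub_dist (hz : z ∈ frontier G) (hd : bdist G z₀ = dist z₀ z) {c : ℝ}
    (hc : c ∈ Icc (0 : ℝ) 1) :
    bdist G (lineMap z₀ z c) = bdist G z₀ - dist z₀ (lineMap z₀ z c) := by
  rw [bdist_lineMap hz hd hc, dist_left_lineMap, Real.norm_of_nonneg hc.1, ← hd]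
  ring

lemma dist_lineMap_lineMap_eq_abs_sub_bdist (hz : z ∈ frontier G) (hd : bdist G z₀ = dist z₀ z)
    {a b : ℝ} (ha : a ∈ Icc (0 : ℝ) 1) (hb : b ∈ Icc (0 : ℝ) 1) :
    dist (lineMap z₀ z a) (lineMap z₀ z b) =
      |bdist G (lineMap z₀ z a) - bdist G (lineMap z₀ z b)| := by
  have hr : 0 ≤ bdist G z₀ := infDist_nonneg
  rw [dist_lineMap_lineMap, bdist_lineMap hz hd ha, bdist_lineMap hz hd hb, ← hd, Real.dist_eq,
    ← sub_mul, abs_mul, abs_of_nonneg hr, sub_sub_sub_cancel_left, abs_sub_comm]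

lemma lineMap_mem_of_bdist_eq_dist (hGo : IsOpen G) (hz₀ : z₀ ∈ G) (hz : z ∈ frontier G)
    (hd : bdist G z₀ = dist z₀ z) {c : ℝ} (hc : c ∈ Ico (0 : ℝ) 1) : lineMap z₀ z c ∈ G := by
  apply ball_bdist_subset hGo hz₀
  rw [mem_ball, dist_lineMap_left, Real.norm_of_nonneg hc.1, ← hd]
  exact mul_lt_of_lt_one_left (bdist_pos hGo ⟨z, hz⟩ hz₀) hc.2

end BoundaryDistance

lemma log_one_add_abs_sub_div_min {x y : ℝ} (hx : 0 < x) (hy : 0 < y) :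
    Real.log (1 + |x - y| / min x y) = |Real.log (x / y)| := by
  rcases le_total x y with h | h
  · have hxy : 1 + |x - y| / min x y = y / x := by
      rw [min_eq_left h, abs_of_nonpos (sub_nonpos.2 h)]
      field_simp
      ring
    rw [hxy, abs_of_nonpos (Real.log_nonpos (by positivity) ((div_le_one hy).2 h)),
      ← Real.log_inv, inv_div]
  · have hxy : 1 + |x - y| / min x y = x / y := by
      rw [min_eq_right h, abs_of_nonneg (sub_nonneg.2 h)]
      field_simp
      ring
    rw [hxy, abs_of_nonneg (Real.log_nonneg ((le_div_iff₀ hy).2 (by linarith)))]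

lemma jDist_eq_abs_log_div {n : ℕ} {G : Set (EuclideanSpace ℝ (Fin n))}
    {x y : EuclideanSpace ℝ (Fin n)} (hx : 0 < bdist G x) (hy : 0 < bdist G y)
    (h : dist x y = |bdist G x - bdist G y|) :
    jDist G x y = |Real.log (bdist G x / bdist G y)| := by
  rw [jDist, h, log_one_add_abs_sub_div_min hx hy]

section ArcLength

variable {E : Type*} [NormedAddCommGroup E] [NormedSpace ℝ E] {γ : ℝ → E}

lemma hasDerivAt_derivWithin_Icc {a b t : ℝ} (hγ : ContDiffOn ℝ 1 γ (Icc a b))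
    (ht : t ∈ Ioo a b) : HasDerivAt γ (derivWithin γ (Icc a b) t) t := by
  have hmem : Icc a b ∈ nhds t := Icc_mem_nhds ht.1 ht.2
  rw [derivWithin_of_mem_nhds hmem]
  exact ((hγ.differentiableOn one_ne_zero t (Ioo_subset_Icc_self ht)).differentiableAt
    hmem).hasDerivAt

noncomputable def arcLength (γ : ℝ → E) (t : ℝ) : ℝ :=
  ∫ x in (0 : ℝ)..t, ‖derivWithin γ (Icc 0 1) x‖

lemma arcLength_zero : arcLength γ 0 = 0 := intervalIntegral.integral_same

lemma arcLength_nonneg {t : ℝ} (ht : 0 ≤ t) : 0 ≤ arcLength γ t :=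
  intervalIntegral.integral_nonneg ht fun _ _ => norm_nonneg _

lemma continuousOn_norm_derivWithin (hγ : ContDiffOn ℝ 1 γ (Icc 0 1)) :
    ContinuousOn (fun t => ‖derivWithin γ (Icc 0 1) t‖) (Icc 0 1) :=
  (hγ.continuousOn_derivWithin (uniqueDiffOn_Icc one_pos) le_rfl).norm

lemma continuousOn_arcLength (hγ : ContDiffOn ℝ 1 γ (Icc 0 1)) :
    ContinuousOn (arcLength γ) (Icc 0 1) := by
  have h := intervalIntegral.continuousOn_primitive_interval (μ := volume) (a := 0) (b := 1)
    ((continuousOn_norm_derivWithin hγ).integrableOn_Icc.mono_set (uIcc_of_le zero_le_one).le)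
  rw [uIcc_of_le zero_le_one] at h
  exact h

lemma hasDerivAt_arcLength (hγ : ContDiffOn ℝ 1 γ (Icc 0 1)) {t : ℝ}
    (ht : t ∈ Ioo (0 : ℝ) 1) : HasDerivAt (arcLength γ) ‖derivWithin γ (Icc 0 1) t‖ t :=
  have hγ' := continuousOn_norm_derivWithin hγ
  intervalIntegral.integral_hasDerivAt_right
    ((hγ'.mono (Icc_subset_Icc le_rfl ht.2.le)).intervalIntegrable_of_Icc ht.1.le)
    ((hγ'.mono Ioo_subset_Icc_self).stronglyMeasurableAtFilter isOpen_Ioo t ht)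
    ((hγ'.mono Ioo_subset_Icc_self).continuousAt (isOpen_Ioo.mem_nhds ht))

lemma dist_le_arcLength [CompleteSpace E] (hγ : ContDiffOn ℝ 1 γ (Icc 0 1)) {t : ℝ}
    (ht : t ∈ Icc (0 : ℝ) 1) : dist (γ 0) (γ t) ≤ arcLength γ t := by
  have hsub : Icc 0 t ⊆ Icc (0 : ℝ) 1 := Icc_subset_Icc le_rfl ht.2
  have hγ' := (hγ.continuousOn_derivWithin (uniqueDiffOn_Icc one_pos) le_rfl).mono hsub
  rw [dist_comm, dist_eq_norm, ← intervalIntegral.integral_eq_sub_of_hasDeriv_right_of_le ht.1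
    (hγ.continuousOn.mono hsub)
    (fun x hx => (hasDerivAt_derivWithin_Icc hγ ⟨hx.1, hx.2.trans_le ht.2⟩).hasDerivWithinAt)
    (hγ'.intervalIntegrable_of_Icc ht.1)]
  exact intervalIntegral.norm_integral_le_integral_norm ht.1

end ArcLength

section QuasihyperbolicLength

variable {n : ℕ} {G : Set (EuclideanSpace ℝ (Fin n))} {γ : ℝ → EuclideanSpace ℝ (Fin n)}

lemma qhLength_eq_integral_derivWithin (hγ : ContDiffOn ℝ 1 γ (Icc 0 1)) :
    qhLength G γ = ∫ t in (0 : ℝ)..1, ‖derivWithin γ (Icc 0 1) t‖ / bdist G (γ t) := by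
  rw [qhLength, intervalIntegral.integral_of_le zero_le_one,
    intervalIntegral.integral_of_le zero_le_one, integral_Ioc_eq_integral_Ioo,
    integral_Ioc_eq_integral_Ioo]
  refine setIntegral_congr_fun measurableSet_Ioo fun t ht => ?_
  rw [(hasDerivAt_derivWithin_Icc hγ ht).deriv]

lemma qhLength_comp_one_sub : qhLength G (fun t => γ (1 - t)) = qhLength G γ := by
  simp only [qhLength, deriv_comp_const_sub, norm_neg]
  simpa using intervalIntegral.integral_comp_sub_left
    (fun t => ‖deriv γ t‖ / bdist G (γ t)) (1 : ℝ) (a := 0) (b := 1)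

end QuasihyperbolicLength

section QuasihyperbolicMetric

variable {n : ℕ} {G : Set (EuclideanSpace ℝ (Fin n))} {γ : ℝ → EuclideanSpace ℝ (Fin n)}

/- Since `bdist G` is 1-Lipschitz, `bdist G (γ t) ≤ bdist G (γ 0) + arcLength γ t`, so the integrand
of `qhLength` dominates the derivative of `log (bdist G (γ 0) + arcLength γ t)`. -/
lemma log_one_add_dist_div_bdist_le_qhLength (hGo : IsOpen G) (hne : (frontier G).Nonempty)
    (hγG : ∀ t ∈ Icc (0 : ℝ) 1, γ t ∈ G) (hγ : ContDiffOn ℝ 1 γ (Icc 0 1)) :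
    Real.log (1 + dist (γ 0) (γ 1) / bdist G (γ 0)) ≤ qhLength G γ := by
  set δ₀ := bdist G (γ 0)
  have hbdist_pos : ∀ t ∈ Icc (0 : ℝ) 1, 0 < bdist G (γ t) := fun t ht =>
    bdist_pos hGo hne (hγG t ht)
  have hδ₀ : 0 < δ₀ := hbdist_pos 0 (left_mem_Icc.2 zero_le_one)
  have hbdist : ∀ t ∈ Icc (0 : ℝ) 1, bdist G (γ t) ≤ δ₀ + arcLength γ t := fun t ht => by
    have h := infDist_le_infDist_add_dist (x := γ t) (y := γ 0) (s := frontier G)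
    rw [dist_comm] at h
    exact h.trans (add_le_add le_rfl (dist_le_arcLength hγ ht))
  have hpos : ∀ t ∈ Icc (0 : ℝ) 1, 0 < δ₀ + arcLength γ t := fun t ht =>
    add_pos_of_pos_of_nonneg hδ₀ (arcLength_nonneg ht.1)
  calc Real.log (1 + dist (γ 0) (γ 1) / δ₀)
      ≤ Real.log (δ₀ + arcLength γ 1) - Real.log (δ₀ + arcLength γ 0) := by
        rw [arcLength_zero, add_zero,
          ← Real.log_div (hpos 1 (right_mem_Icc.2 zero_le_one)).ne' hδ₀.ne', add_div,
          div_self hδ₀.ne']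
        gcongr
        exact dist_le_arcLength hγ (right_mem_Icc.2 zero_le_one)
    _ ≤ ∫ t in (0 : ℝ)..1, ‖derivWithin γ (Icc 0 1) t‖ / bdist G (γ t) := by
        refine intervalIntegral.sub_le_integral_of_hasDeriv_right_of_le zero_le_one
          ((continuousOn_const.add (continuousOn_arcLength hγ)).log fun t ht => (hpos t ht).ne')
          (fun t ht => (((hasDerivAt_arcLength hγ ht).const_add δ₀).log
            (hpos t (Ioo_subset_Icc_self ht)).ne').hasDerivWithinAt) ?_ ?_
        · exact ((continuousOn_norm_derivWithin hγ).div
            ((continuous_infDist_pt _).comp_continuousOn hγ.continuousOn)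
            fun t ht => (hbdist_pos t ht).ne').integrableOn_Icc
        · exact fun t ht => div_le_div_of_nonneg_left (norm_nonneg _)
            (hbdist_pos t (Ioo_subset_Icc_self ht)) (hbdist t (Ioo_subset_Icc_self ht))
    _ = qhLength G γ := (qhLength_eq_integral_derivWithin hγ).symm

lemma jDist_le_qhLength (hGo : IsOpen G) (hne : (frontier G).Nonempty)
    (hγG : ∀ t ∈ Icc (0 : ℝ) 1, γ t ∈ G)
    (hγ : ContDiffOn ℝ 1 γ (Icc 0 1)) : jDist G (γ 0) (γ 1) ≤ qhLength G γ := by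
  rcases le_total (bdist G (γ 0)) (bdist G (γ 1)) with h | h
  · rw [jDist, min_eq_left h]
    exact log_one_add_dist_div_bdist_le_qhLength hGo hne hγG hγ
  · rw [jDist, min_eq_right h, dist_comm, ← qhLength_comp_one_sub]
    have hmaps : MapsTo (fun t : ℝ => 1 - t) (Icc 0 1) (Icc 0 1) := fun t ht =>
      ⟨sub_nonneg.2 ht.2, sub_le_self 1 ht.1⟩
    simpa using log_one_add_dist_div_bdist_le_qhLength hGo hne (fun t ht => hγG _ (hmaps ht))
      (hγ.comp (by fun_prop) hmaps)

lemma qhDist_eq_jDist_of_qhLength_eq (hGo : IsOpen G) (hne : (frontier G).Nonempty)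
    {x y : EuclideanSpace ℝ (Fin n)} {σ : ℝ → EuclideanSpace ℝ (Fin n)} (hσ0 : σ 0 = x)
    (hσ1 : σ 1 = y) (hσG : ∀ t ∈ Icc (0 : ℝ) 1, σ t ∈ G) (hσ : ContDiffOn ℝ 1 σ (Icc 0 1))
    (hlen : qhLength G σ = jDist G x y) : qhDist G x y = jDist G x y := by
  have hlb : ∀ γ : {γ : ℝ → EuclideanSpace ℝ (Fin n) // γ 0 = x ∧ γ 1 = y ∧
      (∀ t ∈ Icc (0 : ℝ) 1, γ t ∈ G) ∧ ContDiffOn ℝ 1 γ (Icc 0 1)},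
      jDist G x y ≤ qhLength G γ.1 := by
    rintro ⟨γ, rfl, rfl, hγG, hγ⟩
    exact jDist_le_qhLength hGo hne hγG hγ
  have : Nonempty {γ : ℝ → EuclideanSpace ℝ (Fin n) // γ 0 = x ∧ γ 1 = y ∧
      (∀ t ∈ Icc (0 : ℝ) 1, γ t ∈ G) ∧ ContDiffOn ℝ 1 γ (Icc 0 1)} := ⟨⟨σ, hσ0, hσ1, hσG, hσ⟩⟩
  exact le_antisymm (hlen ▸ ciInf_le ⟨_, forall_mem_range.2 hlb⟩ ⟨σ, hσ0, hσ1, hσG, hσ⟩)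
    (le_ciInf hlb)

end QuasihyperbolicMetric

lemma integral_abs_sub_div_one_sub_lineMap {a b : ℝ} (ha : a < 1) (hb : b < 1) :
    ∫ t in (0 : ℝ)..1, |b - a| / (1 - lineMap a b t) = |Real.log ((1 - a) / (1 - b))| := by
  have hpos : ∀ t ∈ uIcc (0 : ℝ) 1, 0 < 1 - lineMap a b t := fun t ht => by
    rw [uIcc_of_le zero_le_one] at ht
    exact sub_pos.2 ((convex_Iio (1 : ℝ)).lineMap_mem (mem_Iio.2 ha) (mem_Iio.2 hb) ht)
  have hint : IntervalIntegrable (fun t => (1 - lineMap a b t)⁻¹) volume 0 1 :=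
    (ContinuousOn.inv₀ (by fun_prop) fun t ht => (hpos t ht).ne').intervalIntegrable
  have hftc : ∫ t in (0 : ℝ)..1, (b - a) * (1 - lineMap a b t)⁻¹ =
      Real.log ((1 - a) / (1 - b)) := by
    rw [intervalIntegral.integral_eq_sub_of_hasDerivAt
      (f := fun t => -Real.log (1 - lineMap a b t)) (fun t ht => ?_) (hint.const_mul _)]
    · simp only [lineMap_apply_zero, lineMap_apply_one]
      rw [Real.log_div (by linarith) (by linarith)]
      ring
    · convert ((hasDerivAt_lineMap.const_sub 1).log (hpos t ht).ne').fun_neg using 1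
      field_simp
  calc ∫ t in (0 : ℝ)..1, |b - a| / (1 - lineMap a b t)
      = |b - a| * ∫ t in (0 : ℝ)..1, (1 - lineMap a b t)⁻¹ := by
        simp only [div_eq_mul_inv, intervalIntegral.integral_const_mul]
    _ = |(b - a) * ∫ t in (0 : ℝ)..1, (1 - lineMap a b t)⁻¹| := by
        rw [abs_mul, abs_of_nonneg (a := ∫ t in (0 : ℝ)..1, _)]
        exact intervalIntegral.integral_nonneg zero_le_one fun t ht =>
          (inv_pos.2 (hpos t (by rwa [uIcc_of_le zero_le_one]))).le
    _ = |Real.log ((1 - a) / (1 - b))| := by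
        rw [← intervalIntegral.integral_const_mul, hftc]

lemma qhLength_lineMap_lineMap {n : ℕ} {G : Set (EuclideanSpace ℝ (Fin n))}
    {z₀ z : EuclideanSpace ℝ (Fin n)} (hz : z ∈ frontier G) (hd : bdist G z₀ = dist z₀ z)
    (hr : 0 < bdist G z₀) {a b : ℝ} (ha : a ∈ Ico (0 : ℝ) 1) (hb : b ∈ Ico (0 : ℝ) 1) :
    qhLength G (fun t => lineMap z₀ z (lineMap a b t)) = |Real.log ((1 - a) / (1 - b))| := by
  rw [qhLength, ← integral_abs_sub_div_one_sub_lineMap ha.2 hb.2]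
  refine intervalIntegral.integral_congr fun t ht => ?_
  rw [uIcc_of_le zero_le_one] at ht
  have hderiv : HasDerivAt (fun t => lineMap z₀ z (lineMap a b t)) ((b - a) • (z - z₀)) t :=
    hasDerivAt_lineMap.scomp t hasDerivAt_lineMap
  have hp : lineMap a b t ∈ Icc (0 : ℝ) 1 :=
    Ico_subset_Icc_self ((convex_Ico (0 : ℝ) 1).lineMap_mem ha hb ht)
  rw [hderiv.deriv, bdist_lineMap hz hd hp, norm_smul, Real.norm_eq_abs, ← dist_eq_norm z z₀,
    dist_comm z, ← hd, mul_div_mul_right _ _ hr.ne']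

theorem stmt_2_general (n : ℕ) (G : Set (EuclideanSpace ℝ (Fin n)))
    (hGo : IsOpen G)
    (z₀ : EuclideanSpace ℝ (Fin n)) (hz₀ : z₀ ∈ G)
    (z : EuclideanSpace ℝ (Fin n)) (hz : z ∈ frontier G)
    (hd : bdist G z₀ = dist z₀ z)
    (u v : EuclideanSpace ℝ (Fin n))
    (hu : u ∈ segment ℝ z₀ z) (hu' : u ≠ z)
    (hv : v ∈ segment ℝ z₀ z) (hv' : v ≠ z) :
    qhDist G u v = jDist G u v ∧
    jDist G u v = |Real.log (bdist G u / bdist G v)| ∧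
    |Real.log (bdist G u / bdist G v)| =
      |Real.log ((bdist G z₀ - dist z₀ u) / (bdist G z₀ - dist z₀ v))| := by
  have hr : 0 < bdist G z₀ := bdist_pos hGo ⟨z, hz⟩ hz₀
  rw [segment_eq_image_lineMap] at hu hv
  obtain ⟨a, ha, rfl⟩ := hu
  obtain ⟨b, hb, rfl⟩ := hv
  have ha' : a ∈ Ico (0 : ℝ) 1 := ⟨ha.1, ha.2.lt_of_ne fun h => hu' (h ▸ lineMap_apply_one _ _)⟩
  have hb' : b ∈ Ico (0 : ℝ) 1 := ⟨hb.1, hb.2.lt_of_ne fun h => hv' (h ▸ lineMap_apply_one _ _)⟩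
  have hδu := bdist_lineMap hz hd ha
  have hδv := bdist_lineMap hz hd hb
  have hj := jDist_eq_abs_log_div (hδu ▸ mul_pos (sub_pos.2 ha'.2) hr)
    (hδv ▸ mul_pos (sub_pos.2 hb'.2) hr) (dist_lineMap_lineMap_eq_abs_sub_bdist hz hd ha hb)
  refine ⟨?_, hj, ?_⟩
  · refine qhDist_eq_jDist_of_qhLength_eq hGo ⟨z, hz⟩
      (σ := fun t => lineMap z₀ z (lineMap a b t)) (by simp) (by simp)
      (fun t ht => lineMap_mem_of_bdist_eq_dist hGo hz₀ hz hd
        ((convex_Ico (0 : ℝ) 1).lineMap_mem ha' hb' ht))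
      ((contDiff_lineMap z₀ z).comp (contDiff_lineMap a b)).contDiffOn ?_
    rw [qhLength_lineMap_lineMap hz hd hr ha' hb', hj, hδu, hδv, mul_div_mul_right _ _ hr.ne']
  · rw [← bdist_lineMap_eq_sub_dist hz hd ha, ← bdist_lineMap_eq_sub_dist hz hd hb]

theorem stmt_2 (n : ℕ) (G : Set (EuclideanSpace ℝ (Fin n)))
    (hGo : IsOpen G) (hGc : IsConnected G) (hGp : G ≠ Set.univ)
    (z₀ : EuclideanSpace ℝ (Fin n)) (hz₀ : z₀ ∈ G)
    (z : EuclideanSpace ℝ (Fin n)) (hz : z ∈ frontier G)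
    (hd : bdist G z₀ = dist z₀ z)
    (u v : EuclideanSpace ℝ (Fin n))
    (hu : u ∈ segment ℝ z₀ z) (hu' : u ≠ z)
    (hv : v ∈ segment ℝ z₀ z) (hv' : v ≠ z) :
    qhDist G u v = jDist G u v ∧
    jDist G u v = |Real.log (bdist G u / bdist G v)| ∧
    |Real.log (bdist G u / bdist G v)| =
      |Real.log ((bdist G z₀ - dist z₀ u) / (bdist G z₀ - dist z₀ v))| :=
  stmt_2_general n G hGo z₀ hz₀ z hz hd u v hu hu' hv hv'
end

section
/- Let n ≥ 2, G = ℝⁿ \ {0}, and ε > 0. Set t = exp((1 + 1/ε)·log 3) = 3^{1+1/ε}. Then for every x ∈ G and every y ∈ G lying either in the open ball Bⁿ(0, |x|/t) or outside the closed ball of radius t·|x| centered at 0, one has k_G(x,y) ≤ (1 + ε)·j_G(x,y). -/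
/-
The logarithmic spiral from `x` to `y` about the origin has quasihyperbolic length
`√(log² (|y|/|x|) + α²)` in `ℝⁿ \ {0}`, whereas `j(x, y) ≥ |log (|y|/|x|)|`. Once
`|log (|y|/|x|)| ≥ (1 + 1/ε) log 3`, the angular contribution is absorbed, because
`α² ≤ π² < 9 log² 3 ≤ (2ε + ε²) log² (|y|/|x|)`.
-/

open Set Metric

open Real InnerProductGeometry Module
open scoped RealInnerProductSpace

section InnerProductSpace

variable {E : Type*} [NormedAddCommGroup E] [InnerProductSpace ℝ E]

theorem exists_norm_eq_one_inner_eq_zero (hE : 2 ≤ finrank ℝ E) (x : E) :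
    ∃ b : E, ‖b‖ = 1 ∧ ⟪x, b⟫ = 0 := by
  have : FiniteDimensional ℝ E := Module.finite_of_finrank_pos (by omega)
  have hspan : finrank ℝ (ℝ ∙ x) ≤ 1 := by
    simpa using finrank_span_le_card (R := ℝ) ({x} : Set E)
  have hperp := (ℝ ∙ x).finrank_add_finrank_orthogonal
  have := Module.nontrivial_of_finrank_pos (R := ℝ) (M := (ℝ ∙ x)ᗮ) (by omega)
  obtain ⟨⟨v, hv⟩, hv0⟩ := exists_ne (0 : (ℝ ∙ x)ᗮ)
  have hv0 : v ≠ 0 := fun h => hv0 (by simp [h])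
  refine ⟨‖v‖⁻¹ • v, by simp [norm_smul, hv0], ?_⟩
  rw [inner_smul_right, Submodule.mem_orthogonal_singleton_iff_inner_right.1 hv, mul_zero]

theorem exists_norm_eq_one_inner_eq_zero_eq_norm_smul (hE : 2 ≤ finrank ℝ E) {x w : E}
    (hw : ⟪x, w⟫ = 0) : ∃ b : E, ‖b‖ = 1 ∧ ⟪x, b⟫ = 0 ∧ w = ‖w‖ • b := by
  rcases eq_or_ne w 0 with rfl | hw0
  · obtain ⟨b, hb, hxb⟩ := exists_norm_eq_one_inner_eq_zero hE x
    exact ⟨b, hb, hxb, by simp⟩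
  · refine ⟨‖w‖⁻¹ • w, by simp [norm_smul, hw0], by rw [inner_smul_right, hw, mul_zero], ?_⟩
    rw [smul_smul, mul_inv_cancel₀ (norm_ne_zero_iff.2 hw0), one_smul]

theorem exists_eq_smul_cos_angle_add_sin_angle (hE : 2 ≤ finrank ℝ E) {x : E} (hx : x ≠ 0)
    (y : E) : ∃ e : E, ⟪x, e⟫ = 0 ∧ ‖e‖ = ‖x‖ ∧
      y = (‖y‖ / ‖x‖) • (cos (angle x y) • x + sin (angle x y) • e) := by
  have hx' : ‖x‖ ≠ 0 := norm_ne_zero_iff.2 hx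
  have hcos : ⟪x, y⟫ = ‖y‖ / ‖x‖ * cos (angle x y) * ‖x‖ ^ 2 := by
    rw [← cos_angle_mul_norm_mul_norm]; field_simp
  set w := y - (‖y‖ / ‖x‖ * cos (angle x y)) • x with hw
  have hxw : ⟪x, w⟫ = 0 := by
    rw [hw, inner_sub_right, inner_smul_right, real_inner_self_eq_norm_sq, hcos, sub_self]
  have hnorm_w : ‖w‖ = ‖y‖ / ‖x‖ * sin (angle x y) * ‖x‖ := by
    refine (sq_eq_sq₀ (norm_nonneg _) (by have := sin_angle_nonneg x y; positivity)).1 ?_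
    rw [hw, norm_sub_sq_real, inner_smul_right, norm_smul, real_inner_comm, hcos,
      Real.norm_eq_abs, mul_pow, sq_abs]
    field_simp
    linear_combination -‖y‖ ^ 2 * sin_sq_add_cos_sq (angle x y)
  obtain ⟨b, hb, hxb, hwb⟩ := exists_norm_eq_one_inner_eq_zero_eq_norm_smul hE hxw
  refine ⟨‖x‖ • b, by rw [inner_smul_right, hxb, mul_zero], by simp [norm_smul, hb], ?_⟩
  rw [smul_add, smul_smul, smul_smul, smul_smul, ← hnorm_w, ← hwb, hw, add_sub_cancel]

variable {e₁ e₂ : E}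

theorem norm_smul_add_smul_of_inner_eq_zero (h : ⟪e₁, e₂⟫ = 0) (h' : ‖e₂‖ = ‖e₁‖) (p q : ℝ) :
    ‖p • e₁ + q • e₂‖ = √(p ^ 2 + q ^ 2) * ‖e₁‖ := by
  rw [← sqrt_sq (norm_nonneg _), ← sqrt_sq (norm_nonneg e₁), ← sqrt_mul (by positivity),
    norm_add_sq_real, norm_smul, norm_smul, inner_smul_left, inner_smul_right, h, h',
    Real.norm_eq_abs, Real.norm_eq_abs, mul_pow, mul_pow, sq_abs, sq_abs]
  congr 1
  simp only [conj_trivial]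
  ring

noncomputable def logSpiral (e₁ e₂ : E) (a θ u : ℝ) : E :=
  exp (a * u) • (cos (θ * u) • e₁ + sin (θ * u) • e₂)

variable (a θ : ℝ)

theorem logSpiral_zero : logSpiral e₁ e₂ a θ 0 = e₁ := by
  simp [logSpiral]

theorem logSpiral_one : logSpiral e₁ e₂ a θ 1 = exp a • (cos θ • e₁ + sin θ • e₂) := by
  simp [logSpiral]

theorem contDiff_logSpiral : ContDiff ℝ 1 (logSpiral e₁ e₂ a θ) := by
  unfold logSpiral
  fun_prop

theorem hasDerivAt_logSpiral (u : ℝ) :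
    HasDerivAt (logSpiral e₁ e₂ a θ)
      (exp (a * u) • ((a * cos (θ * u) - θ * sin (θ * u)) • e₁ +
        (a * sin (θ * u) + θ * cos (θ * u)) • e₂)) u := by
  have hexp : HasDerivAt (fun u => exp (a * u)) (exp (a * u) * a) u := by
    simpa using ((hasDerivAt_id u).const_mul a).exp
  have hcos : HasDerivAt (fun u => cos (θ * u)) (-sin (θ * u) * θ) u := by
    simpa using ((hasDerivAt_id u).const_mul θ).cos
  have hsin : HasDerivAt (fun u => sin (θ * u)) (cos (θ * u) * θ) u := by
    simpa using ((hasDerivAt_id u).const_mul θ).sin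
  refine (hexp.smul ((hcos.smul_const e₁).add (hsin.smul_const e₂))).congr_deriv ?_
  simp only [Pi.add_apply]
  module

theorem norm_logSpiral (h : ⟪e₁, e₂⟫ = 0) (h' : ‖e₂‖ = ‖e₁‖) (u : ℝ) :
    ‖logSpiral e₁ e₂ a θ u‖ = exp (a * u) * ‖e₁‖ := by
  rw [logSpiral, norm_smul, norm_smul_add_smul_of_inner_eq_zero h h', cos_sq_add_sin_sq,
    sqrt_one, one_mul, Real.norm_eq_abs, abs_of_pos (exp_pos _)]

theorem norm_deriv_logSpiral (h : ⟪e₁, e₂⟫ = 0) (h' : ‖e₂‖ = ‖e₁‖) (u : ℝ) :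
    ‖deriv (logSpiral e₁ e₂ a θ) u‖ = √(a ^ 2 + θ ^ 2) * ‖logSpiral e₁ e₂ a θ u‖ := by
  rw [(hasDerivAt_logSpiral a θ u).deriv, norm_smul, norm_smul_add_smul_of_inner_eq_zero h h',
    norm_logSpiral a θ h h', Real.norm_eq_abs, abs_of_pos (exp_pos _)]
  have : (a * cos (θ * u) - θ * sin (θ * u)) ^ 2 + (a * sin (θ * u) + θ * cos (θ * u)) ^ 2
      = a ^ 2 + θ ^ 2 := by
    linear_combination (a ^ 2 + θ ^ 2) * sin_sq_add_cos_sq (θ * u)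
  rw [this]; ring

end InnerProductSpace

theorem bdist_compl_singleton {n : ℕ} (hn : n ≠ 0) (z w : EuclideanSpace ℝ (Fin n)) :
    bdist {w}ᶜ z = dist z w := by
  have : Nontrivial (EuclideanSpace ℝ (Fin n)) :=
    Module.nontrivial_of_finrank_pos (R := ℝ) (by simp [Nat.pos_of_ne_zero hn])
  rw [bdist, frontier_compl, frontier, closure_singleton, interior_singleton, Set.sdiff_empty,
    Metric.infDist_singleton]

theorem qhDist_le_qhLength {n : ℕ} {G : Set (EuclideanSpace ℝ (Fin n))}
    {x y : EuclideanSpace ℝ (Fin n)} {γ : ℝ → EuclideanSpace ℝ (Fin n)} (h₀ : γ 0 = x)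
    (h₁ : γ 1 = y) (hG : ∀ t ∈ Set.Icc (0 : ℝ) 1, γ t ∈ G)
    (hγ : ContDiffOn ℝ 1 γ (Set.Icc 0 1)) : qhDist G x y ≤ qhLength G γ := by
  let Γ := {γ : ℝ → EuclideanSpace ℝ (Fin n) // γ 0 = x ∧ γ 1 = y ∧
      (∀ t ∈ Set.Icc (0:ℝ) 1, γ t ∈ G) ∧ ContDiffOn ℝ 1 γ (Set.Icc 0 1)}
  have hb : BddBelow (Set.range fun γ' : Γ => qhLength G γ'.1) := by
    refine ⟨0, ?_⟩
    rintro _ ⟨γ', rfl⟩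
    exact intervalIntegral.integral_nonneg zero_le_one
      fun _ _ => div_nonneg (norm_nonneg _) Metric.infDist_nonneg
  exact ciInf_le hb (⟨γ, h₀, h₁, hG, hγ⟩ : Γ)

theorem qhLength_compl_zero_logSpiral {n : ℕ} (hn : n ≠ 0) {e₁ e₂ : EuclideanSpace ℝ (Fin n)}
    (he₁ : e₁ ≠ 0) (h : ⟪e₁, e₂⟫ = 0) (h' : ‖e₂‖ = ‖e₁‖) (a θ : ℝ) :
    qhLength {0}ᶜ (logSpiral e₁ e₂ a θ) = √(a ^ 2 + θ ^ 2) := by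
  have hne : ∀ u, ‖logSpiral e₁ e₂ a θ u‖ ≠ 0 := fun u => by
    rw [norm_logSpiral a θ h h']; exact mul_ne_zero (exp_pos _).ne' (norm_ne_zero_iff.2 he₁)
  simp only [qhLength, bdist_compl_singleton hn, dist_zero_right,
    norm_deriv_logSpiral a θ h h', mul_div_cancel_right₀ _ (hne _), intervalIntegral.integral_const,
    sub_zero, one_smul]

theorem qhDist_compl_zero_le {n : ℕ} (hn : 2 ≤ n) {x y : EuclideanSpace ℝ (Fin n)}
    (hx : x ≠ 0) (hy : y ≠ 0) :
    qhDist {0}ᶜ x y ≤ √(log (‖y‖ / ‖x‖) ^ 2 + angle x y ^ 2) := by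
  obtain ⟨e, hxe, he, hy_eq⟩ :=
    exists_eq_smul_cos_angle_add_sin_angle (by simpa using hn) hx y
  rw [← qhLength_compl_zero_logSpiral (by omega) hx hxe he (log (‖y‖ / ‖x‖)) (angle x y)]
  refine qhDist_le_qhLength (logSpiral_zero _ _) ?_ (fun u _ => ?_)
    (contDiff_logSpiral _ _).contDiffOn
  · rw [logSpiral_one, exp_log (by positivity), ← hy_eq]
  · rw [Set.mem_compl_singleton_iff, ← norm_ne_zero_iff, norm_logSpiral _ _ hxe he]
    exact mul_ne_zero (exp_pos _).ne' (norm_ne_zero_iff.2 hx)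

theorem abs_log_div_le_log_one_add_div_min {r s d : ℝ} (hr : 0 < r) (hs : 0 < s)
    (hd : |r - s| ≤ d) : |log (r / s)| ≤ log (1 + d / min r s) := by
  rcases le_total s r with h | h
  · rw [abs_of_nonneg (log_nonneg ((one_le_div hs).2 h)), min_eq_right h]
    refine log_le_log (by positivity) ?_
    rw [div_le_iff₀ hs, add_mul, div_mul_cancel₀ _ hs.ne']
    linarith [le_abs_self (r - s)]
  · rw [abs_of_nonpos (log_nonpos (by positivity) ((div_le_one hs).2 h)), ← log_inv, inv_div,
      min_eq_left h]
    refine log_le_log (by positivity) ?_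
    rw [div_le_iff₀ hr, add_mul, div_mul_cancel₀ _ hr.ne']
    linarith [neg_abs_le (r - s)]

theorem abs_log_norm_div_le_jDist {n : ℕ} (hn : n ≠ 0) {x y : EuclideanSpace ℝ (Fin n)}
    (hx : x ≠ 0) (hy : y ≠ 0) : |log (‖y‖ / ‖x‖)| ≤ jDist {0}ᶜ x y := by
  rw [jDist, bdist_compl_singleton hn, bdist_compl_singleton hn, dist_zero_right,
    dist_zero_right, min_comm]
  exact abs_log_div_le_log_one_add_div_min (norm_pos_iff.2 hy) (norm_pos_iff.2 hx)
    (by rw [dist_comm, dist_eq_norm]; exact abs_norm_sub_norm_le y x)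

theorem lt_abs_log_div_of_lt_or_lt {r s T : ℝ} (hr : 0 < r) (hs : 0 < s)
    (h : s < r / exp T ∨ exp T * r < s) : T < |log (s / r)| := by
  rcases h with h | h
  · have : log (s / r) < -T := by
      rw [log_lt_iff_lt_exp (by positivity), div_lt_iff₀ hr, exp_neg, ← div_eq_inv_mul]
      exact h
    linarith [neg_abs_le (log (s / r))]
  · have : T < log (s / r) := by
      rw [lt_log_iff_exp_lt (by positivity), lt_div_iff₀ hr]
      exact h
    linarith [le_abs_self (log (s / r))]

theorem sqrt_sq_add_sq_le_of_log_three_le {ε θ L : ℝ} (hε : 0 < ε) (hθ₀ : 0 ≤ θ) (hθ : θ ≤ π)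
    (hL : (1 + 1 / ε) * log 3 ≤ |L|) : √(L ^ 2 + θ ^ 2) ≤ (1 + ε) * |L| := by
  have hεL : (1 + ε) * log 3 ≤ ε * |L| :=
    calc (1 + ε) * log 3 = ε * ((1 + 1 / ε) * log 3) := by field_simp; ring
      _ ≤ ε * |L| := by gcongr
  have hcubic : 9 * ε ≤ (1 + ε) ^ 2 * (2 + ε) := by
    nlinarith [sq_nonneg (2 * ε - 1), pow_pos hε 3]
  have hθL : θ ^ 2 ≤ (2 * ε + ε ^ 2) * |L| ^ 2 :=
    calc θ ^ 2 ≤ (3 * log 3) ^ 2 := by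
          gcongr; linarith [pi_lt_d2, log_three_gt_d9]
      _ ≤ (1 + ε) ^ 2 * (2 + ε) / ε * log 3 ^ 2 := by
          rw [mul_pow]; gcongr; rw [le_div_iff₀ hε]; linarith
      _ = (2 + ε) / ε * ((1 + ε) * log 3) ^ 2 := by ring
      _ ≤ (2 + ε) / ε * (ε * |L|) ^ 2 := by gcongr
      _ = (2 * ε + ε ^ 2) * |L| ^ 2 := by field_simp
  rw [sqrt_le_left (by positivity), ← sq_abs L]
  linarith

theorem stmt_7 (n : ℕ) (hn : 2 ≤ n) (ε : ℝ) (hε : 0 < ε)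
    (t : ℝ) (ht : t = Real.exp ((1 + 1 / ε) * Real.log 3))
    (x y : EuclideanSpace ℝ (Fin n)) (hx : x ≠ 0) (hy : y ≠ 0)
    (hmem : y ∈ Metric.ball (0 : EuclideanSpace ℝ (Fin n)) (‖x‖ / t) ∨
            y ∉ Metric.closedBall (0 : EuclideanSpace ℝ (Fin n)) (t * ‖x‖)) :
    qhDist ({0}ᶜ : Set (EuclideanSpace ℝ (Fin n))) x y ≤
      (1 + ε) * jDist ({0}ᶜ : Set (EuclideanSpace ℝ (Fin n))) x y := by
  rw [ht, mem_ball_zero_iff, mem_closedBall_zero_iff, not_le] at hmem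
  have hL : (1 + 1 / ε) * log 3 ≤ |log (‖y‖ / ‖x‖)| :=
    (lt_abs_log_div_of_lt_or_lt (norm_pos_iff.2 hx) (norm_pos_iff.2 hy) hmem).le
  calc qhDist {0}ᶜ x y ≤ √(log (‖y‖ / ‖x‖) ^ 2 + angle x y ^ 2) := qhDist_compl_zero_le hn hx hy
    _ ≤ (1 + ε) * |log (‖y‖ / ‖x‖)| :=
      sqrt_sq_add_sq_le_of_log_three_le hε (angle_nonneg x y) (angle_le_pi x y) hL
    _ ≤ (1 + ε) * jDist {0}ᶜ x y := by
      gcongr; exact abs_log_norm_div_le_jDist (by omega) hx hy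
end

section
/- Let Bⁿ be the open unit ball in ℝⁿ (n ≥ 1). Then for all x, y ∈ Bⁿ one has k_{Bⁿ}(x,y) ≥ 2·log(2/(2 − |x−y|)) ≥ |x−y|. Equivalently, the identity map from (Bⁿ, k_{Bⁿ}) to (Bⁿ, |·|) has modulus of continuity ω(t) = 2(1 − e^{−t/2}), i.e., |x−y| ≤ 2(1 − e^{−k_{Bⁿ}(x,y)/2}). -/
/-!
Project a path from `x` to `y` onto the unit vector `e` pointing from `x` to `y`. The projection
moves no faster than the path, and since `|⟪e, z⟫| ≤ ‖z‖` it stays at least as far from `±1` as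
the path stays from the unit sphere. Hence the quasihyperbolic length of the path is at least the
quasihyperbolic distance in `(-1, 1)` between `⟪e, x⟫` and `⟪e, y⟫`, two points at distance
`‖x - y‖`. As the density `1 / (1 - |v|)` is smallest at `0`, that distance is at least the one
between `∓‖x - y‖ / 2`, which is `2 log (2 / (2 - ‖x - y‖))`. The remaining inequalities are
`log t ≤ t - 1` and monotonicity of `exp`.
-/

open Set Metric

open MeasureTheory
open scoped RealInnerProductSpace

/-- `qhCoord u = ∫₀ᵘ dv / (1 - |v|)`, the signed quasihyperbolic distance from `0` to `u` in the
interval `(-1, 1)`. -/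
noncomputable def qhCoord (u : ℝ) : ℝ :=
  if 0 ≤ u then -Real.log (1 - u) else Real.log (1 + u)

theorem hasDerivWithinAt_qhCoord_Ici {u : ℝ} (hu₀ : 0 ≤ u) (hu₁ : u < 1) :
    HasDerivWithinAt qhCoord (1 - |u|)⁻¹ (Ici 0) u := by
  have h := (((hasDerivAt_id u).const_sub 1).log (by simp; linarith)).neg
  rw [abs_of_nonneg hu₀]
  refine (h.hasDerivWithinAt.congr (fun v hv => if_pos hv) (if_pos hu₀)).congr_deriv ?_
  simp [div_eq_mul_inv]

theorem hasDerivWithinAt_qhCoord_Iic {u : ℝ} (hu₀ : u ≤ 0) (hu₁ : -1 < u) :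
    HasDerivWithinAt qhCoord (1 - |u|)⁻¹ (Iic 0) u := by
  have h := ((hasDerivAt_id u).const_add 1).log (by simp; linarith)
  rw [abs_of_nonpos hu₀, sub_neg_eq_add]
  have hEq : ∀ v ≤ (0 : ℝ), qhCoord v = Real.log (1 + v) := fun v hv => by
    rcases hv.lt_or_eq with hv | rfl
    · exact if_neg hv.not_ge
    · simp [qhCoord]
  refine (h.hasDerivWithinAt.congr (fun v hv => hEq v hv) (hEq u hu₀)).congr_deriv ?_
  simp [div_eq_mul_inv]

theorem hasDerivAt_qhCoord {u : ℝ} (hu : |u| < 1) : HasDerivAt qhCoord (1 - |u|)⁻¹ u := by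
  obtain ⟨hu₁, hu₂⟩ := abs_lt.1 hu
  rcases lt_trichotomy u 0 with hneg | rfl | hpos
  · exact (hasDerivWithinAt_qhCoord_Iic hneg.le hu₁).hasDerivAt (Iic_mem_nhds hneg)
  · have h := (hasDerivWithinAt_qhCoord_Iic le_rfl hu₁).union
      (hasDerivWithinAt_qhCoord_Ici le_rfl hu₂)
    rwa [Iic_union_Ici, hasDerivWithinAt_univ] at h
  · exact (hasDerivWithinAt_qhCoord_Ici hpos.le hu₂).hasDerivAt (Ici_mem_nhds hpos)

theorem two_mul_log_le_qhCoord_sub {α β : ℝ} (hα : -1 < α) (hβ : β < 1) (hαβ : α ≤ β) :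
    2 * Real.log (2 / (2 - (β - α))) ≤ qhCoord β - qhCoord α := by
  obtain ⟨d, hd, rfl⟩ : ∃ d, 0 ≤ d ∧ β = α + d := ⟨β - α, by linarith, by ring⟩
  have hd₂ : 0 < 2 - d := by linarith
  rw [add_sub_cancel_left, ← Real.log_rpow (by positivity) 2, Real.rpow_two, div_pow]
  by_cases hα₀ : 0 ≤ α
  · rw [qhCoord, qhCoord, if_pos (by linarith), if_pos hα₀, neg_sub_neg,
      ← Real.log_div (by linarith) (by linarith)]
    refine Real.log_le_log (by positivity) ?_
    rw [div_le_div_iff₀ (by positivity) (by linarith)]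
    nlinarith [mul_nonneg (mul_nonneg hd hd) (by linarith : 0 ≤ 1 - α), mul_nonneg hd hα₀]
  by_cases hβ₀ : 0 ≤ α + d
  · have hpos : 0 < (1 - (α + d)) * (1 + α) := mul_pos (by linarith) (by linarith)
    have hsum : qhCoord (α + d) - qhCoord α = Real.log ((1 - (α + d)) * (1 + α))⁻¹ := by
      rw [qhCoord, qhCoord, if_pos hβ₀, if_neg hα₀, Real.log_inv,
        Real.log_mul (by linarith) (by linarith)]
      ring
    rw [hsum]
    refine Real.log_le_log (by positivity) ?_
    rw [div_le_iff₀ (by positivity), inv_mul_eq_div, le_div_iff₀ hpos]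
    nlinarith [sq_nonneg (2 * α + d)]
  · rw [qhCoord, qhCoord, if_neg hβ₀, if_neg hα₀, ← Real.log_div (by linarith) (by linarith)]
    refine Real.log_le_log (by positivity) ?_
    rw [div_le_div_iff₀ (by positivity) (by linarith)]
    nlinarith [mul_nonneg (mul_nonneg hd hd) (by linarith : 0 ≤ 1 + (α + d)),
      mul_nonneg hd (by linarith : 0 ≤ -(α + d))]

theorem log_sub_div_two_eq_neg {d : ℝ} : Real.log ((2 - d) / 2) = -Real.log (2 / (2 - d)) := by
  rw [← Real.log_inv, inv_div]

theorem le_two_mul_log_two_div {d : ℝ} (hd : d < 2) : d ≤ 2 * Real.log (2 / (2 - d)) := by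
  have h := Real.log_le_sub_one_of_pos (show 0 < (2 - d) / 2 by linarith)
  rw [log_sub_div_two_eq_neg] at h
  linarith

theorem le_two_mul_one_sub_exp {d k : ℝ} (hd : d < 2) (hk : 2 * Real.log (2 / (2 - d)) ≤ k) :
    d ≤ 2 * (1 - Real.exp (-k / 2)) := by
  have h : Real.exp (-k / 2) ≤ (2 - d) / 2 := by
    rw [← Real.exp_log (show 0 < (2 - d) / 2 by linarith), Real.exp_le_exp,
      log_sub_div_two_eq_neg]
    linarith
  linarith

theorem infDist_sphere_zero {E : Type*} [NormedAddCommGroup E] [NormedSpace ℝ E] [Nontrivial E]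
    {z : E} {r : ℝ} (hz : ‖z‖ ≤ r) : infDist z (sphere 0 r) = r - ‖z‖ := by
  have hr : 0 ≤ r := (norm_nonneg z).trans hz
  have hne : (sphere (0 : E) r).Nonempty := NormedSpace.sphere_nonempty.2 hr
  refine le_antisymm ?_ ((le_infDist hne).2 fun w hw => ?_)
  · rcases eq_or_ne z 0 with rfl | hz₀
    · obtain ⟨w, hw⟩ := hne
      simpa [mem_sphere_zero_iff_norm.1 hw] using infDist_le_dist_of_mem (x := (0 : E)) hw
    · have hz' : 0 < ‖z‖ := norm_pos_iff.2 hz₀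
      have hw : (r / ‖z‖) • z ∈ sphere (0 : E) r := by
        simp [norm_smul, abs_of_nonneg hr, hz₀]
      refine (infDist_le_dist_of_mem hw).trans_eq ?_
      have hc : 1 ≤ r / ‖z‖ := (one_le_div hz').2 hz
      rw [dist_eq_norm, ← one_smul ℝ z, smul_smul, ← sub_smul, one_smul, norm_smul,
        Real.norm_eq_abs, abs_of_nonpos (by linarith)]
      field_simp
      ring
  · rw [dist_comm, dist_eq_norm, ← mem_sphere_zero_iff_norm.1 hw]
    exact norm_sub_norm_le w z

theorem bdist_unitBall {n : ℕ} [Nontrivial (EuclideanSpace ℝ (Fin n))]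
    {z : EuclideanSpace ℝ (Fin n)} (hz : z ∈ ball 0 1) : bdist (ball 0 1) z = 1 - ‖z‖ := by
  rw [bdist, frontier_ball _ one_ne_zero, infDist_sphere_zero (mem_ball_zero_iff.1 hz).le]

theorem integrableOn_qhLength_integrand {n : ℕ} {G : Set (EuclideanSpace ℝ (Fin n))}
    {γ : ℝ → EuclideanSpace ℝ (Fin n)} (hγ : ContDiffOn ℝ 1 γ (Icc 0 1))
    (hδ : ∀ t ∈ Icc (0 : ℝ) 1, bdist G (γ t) ≠ 0) :
    IntegrableOn (fun t => ‖deriv γ t‖ / bdist G (γ t)) (Icc 0 1) := by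
  have hcont : ContinuousOn (fun t => ‖derivWithin γ (Icc 0 1) t‖ / bdist G (γ t)) (Icc 0 1) :=
    (hγ.continuousOn_derivWithin (uniqueDiffOn_Icc zero_lt_one) le_rfl).norm.div
      ((continuous_infDist_pt _).comp_continuousOn hγ.continuousOn) hδ
  rw [integrableOn_Icc_iff_integrableOn_Ioo]
  refine (hcont.integrableOn_Icc.mono_set Ioo_subset_Icc_self).congr_fun (fun t ht => ?_)
    measurableSet_Ioo
  simp only [derivWithin_of_mem_nhds (Icc_mem_nhds ht.1 ht.2)]

theorem abs_real_inner_le_norm_of_norm_le_one {F : Type*} [NormedAddCommGroup F]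
    [InnerProductSpace ℝ F] {e : F} (he : ‖e‖ ≤ 1) (z : F) : |⟪e, z⟫| ≤ ‖z‖ :=
  (abs_real_inner_le_norm e z).trans (mul_le_of_le_one_left (norm_nonneg z) he)

theorem qhCoord_sub_le_qhLength_unitBall {n : ℕ} [Nontrivial (EuclideanSpace ℝ (Fin n))]
    {γ : ℝ → EuclideanSpace ℝ (Fin n)} (hmem : ∀ t ∈ Icc (0 : ℝ) 1, γ t ∈ ball 0 1)
    (hγ : ContDiffOn ℝ 1 γ (Icc 0 1)) {e : EuclideanSpace ℝ (Fin n)} (he : ‖e‖ ≤ 1) :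
    qhCoord ⟪e, γ 1⟫ - qhCoord ⟪e, γ 0⟫ ≤ qhLength (ball 0 1) γ := by
  have hnorm : ∀ t ∈ Icc (0 : ℝ) 1, ‖γ t‖ < 1 := fun t ht => mem_ball_zero_iff.1 (hmem t ht)
  have hδ : ∀ t ∈ Icc (0 : ℝ) 1, bdist (ball 0 1) (γ t) = 1 - ‖γ t‖ :=
    fun t ht => bdist_unitBall (hmem t ht)
  have hproj : ∀ t, |⟪e, γ t⟫| ≤ ‖γ t‖ := fun t => abs_real_inner_le_norm_of_norm_le_one he _
  have hγ' : ∀ t ∈ Ioo (0 : ℝ) 1, HasDerivAt γ (deriv γ t) t := fun t ht =>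
    ((hγ.differentiableOn one_ne_zero t (Ioo_subset_Icc_self ht)).differentiableAt
      (Icc_mem_nhds ht.1 ht.2)).hasDerivAt
  refine intervalIntegral.sub_le_integral_of_hasDeriv_right_of_le zero_le_one
    (g := fun t => qhCoord ⟪e, γ t⟫)
    (g' := fun t => (1 - |⟪e, γ t⟫|)⁻¹ * ⟪e, deriv γ t⟫) (fun t ht => ?_) (fun t ht => ?_)
    (integrableOn_qhLength_integrand hγ fun t ht => ?_) (fun t ht => ?_)
  · exact (hasDerivAt_qhCoord ((hproj t).trans_lt (hnorm t ht))).continuousAt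
      |>.comp_continuousWithinAt (f := fun s => ⟪e, γ s⟫)
        (continuousWithinAt_const.inner (hγ.continuousOn t ht))
  · have hs : HasDerivAt (fun s => ⟪e, γ s⟫) ⟪e, deriv γ t⟫ t :=
      (innerSL ℝ e).hasFDerivAt.comp_hasDerivAt t (hγ' t ht)
    exact ((hasDerivAt_qhCoord ((hproj t).trans_lt (hnorm t (Ioo_subset_Icc_self ht)))).comp t
      hs).hasDerivWithinAt
  · rw [hδ t ht]
    linarith [hnorm t ht]
  · have ht' := Ioo_subset_Icc_self ht
    have hγt := hnorm t ht'
    calc (1 - |⟪e, γ t⟫|)⁻¹ * ⟪e, deriv γ t⟫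
        ≤ (1 - |⟪e, γ t⟫|)⁻¹ * ‖deriv γ t‖ :=
          mul_le_mul_of_nonneg_left ((le_abs_self _).trans
            (abs_real_inner_le_norm_of_norm_le_one he _)) (inv_nonneg.2 (by linarith [hproj t]))
      _ ≤ (1 - ‖γ t‖)⁻¹ * ‖deriv γ t‖ :=
          mul_le_mul_of_nonneg_right (inv_anti₀ (by linarith) (by linarith [hproj t]))
            (norm_nonneg _)
      _ = ‖deriv γ t‖ / bdist (ball 0 1) (γ t) := by rw [hδ t ht', div_eq_inv_mul]

theorem two_mul_log_le_qhLength_unitBall {n : ℕ} [Nontrivial (EuclideanSpace ℝ (Fin n))]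
    {γ : ℝ → EuclideanSpace ℝ (Fin n)} (hmem : ∀ t ∈ Icc (0 : ℝ) 1, γ t ∈ ball 0 1)
    (hγ : ContDiffOn ℝ 1 γ (Icc 0 1)) :
    2 * Real.log (2 / (2 - dist (γ 0) (γ 1))) ≤ qhLength (ball 0 1) γ := by
  set v := γ 1 - γ 0
  set e := ‖v‖⁻¹ • v
  have he : ‖e‖ ≤ 1 := by
    rcases eq_or_ne v 0 with hv | hv
    · simp [e, hv]
    · exact (norm_smul_inv_norm hv).le
  have hd : ⟪e, γ 1⟫ - ⟪e, γ 0⟫ = dist (γ 0) (γ 1) := by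
    rw [← inner_sub_right, real_inner_smul_left, real_inner_self_eq_norm_sq, dist_eq_norm',
      inv_mul_eq_div, sq, mul_self_div_self]
  have hproj : ∀ t ∈ Icc (0 : ℝ) 1, |⟪e, γ t⟫| < 1 := fun t ht =>
    (abs_real_inner_le_norm_of_norm_le_one he _).trans_lt (mem_ball_zero_iff.1 (hmem t ht))
  calc 2 * Real.log (2 / (2 - dist (γ 0) (γ 1)))
      = 2 * Real.log (2 / (2 - (⟪e, γ 1⟫ - ⟪e, γ 0⟫))) := by rw [hd]
    _ ≤ qhCoord ⟪e, γ 1⟫ - qhCoord ⟪e, γ 0⟫ :=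
        two_mul_log_le_qhCoord_sub (abs_lt.1 (hproj 0 (by simp))).1
          (abs_lt.1 (hproj 1 (by simp))).2 (by linarith [hd, dist_nonneg (x := γ 0) (y := γ 1)])
    _ ≤ qhLength (ball 0 1) γ := qhCoord_sub_le_qhLength_unitBall hmem hγ he

theorem le_qhDist_of_convex {n : ℕ} {G : Set (EuclideanSpace ℝ (Fin n))} (hG : Convex ℝ G)
    {x y : EuclideanSpace ℝ (Fin n)} (hx : x ∈ G) (hy : y ∈ G) {c : ℝ}
    (h : ∀ γ : ℝ → EuclideanSpace ℝ (Fin n), γ 0 = x → γ 1 = y → (∀ t ∈ Icc (0 : ℝ) 1, γ t ∈ G) →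
      ContDiffOn ℝ 1 γ (Icc 0 1) → c ≤ qhLength G γ) :
    c ≤ qhDist G x y := by
  have hseg : ∀ t ∈ Icc (0 : ℝ) 1, AffineMap.lineMap x y t ∈ G := fun t ht =>
    hG.lineMap_mem hx hy ht
  have : Nonempty {γ : ℝ → EuclideanSpace ℝ (Fin n) // γ 0 = x ∧ γ 1 = y ∧
      (∀ t ∈ Icc (0 : ℝ) 1, γ t ∈ G) ∧ ContDiffOn ℝ 1 γ (Icc 0 1)} :=
    ⟨⟨AffineMap.lineMap x y, AffineMap.lineMap_apply_zero x y, AffineMap.lineMap_apply_one x y,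
      hseg, (AffineMap.contDiff_lineMap x y).contDiffOn⟩⟩
  exact le_ciInf fun γ => h γ.1 γ.2.1 γ.2.2.1 γ.2.2.2.1 γ.2.2.2.2

theorem stmt_8 (n : ℕ) (hn : 1 ≤ n) (x y : EuclideanSpace ℝ (Fin n))
    (hx : x ∈ Metric.ball (0 : EuclideanSpace ℝ (Fin n)) 1)
    (hy : y ∈ Metric.ball (0 : EuclideanSpace ℝ (Fin n)) 1) :
    2 * Real.log (2 / (2 - dist x y)) ≤
      qhDist (Metric.ball (0 : EuclideanSpace ℝ (Fin n)) 1) x y ∧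
    dist x y ≤ 2 * Real.log (2 / (2 - dist x y)) ∧
    dist x y ≤ 2 * (1 - Real.exp
      (-(qhDist (Metric.ball (0 : EuclideanSpace ℝ (Fin n)) 1) x y) / 2)) := by
  have : Nontrivial (EuclideanSpace ℝ (Fin n)) :=
    Module.nontrivial_of_finrank_pos (R := ℝ) (by rw [finrank_euclideanSpace_fin]; omega)
  have hd : dist x y < 2 := calc
    dist x y ≤ dist x 0 + dist 0 y := dist_triangle x 0 y
    _ < 1 + 1 := add_lt_add (mem_ball.1 hx) (mem_ball'.1 hy)
    _ = 2 := one_add_one_eq_two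
  have hk : 2 * Real.log (2 / (2 - dist x y)) ≤ qhDist (ball 0 1) x y :=
    le_qhDist_of_convex (convex_ball 0 1) hx hy fun γ h0 h1 hmem hγ =>
      h0 ▸ h1 ▸ two_mul_log_le_qhLength_unitBall hmem hγ
  exact ⟨hk, le_two_mul_log_two_div hd, le_two_mul_one_sub_exp hd hk⟩
end

section
/- Let G ⊊ ℝⁿ be a domain (nonempty open connected proper subset) with finite diameter, and set r = sqrt(n/(2n+2))·diam(G). Then for all distinct x, y ∈ G, writing t = |x−y|/r, one has j_G(x,y) ≥ log((2 + t)/(2 − t)) ≥ t. Equivalently, the identity map from (G, j_G) to (G, |·|) has modulus of continuity ω(t) = 2r·tanh(t/2). -/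
open Set Metric

/-!
Points `u`, `v` on the line through `x` and `y`, beyond `x` and `y` at distances `δ(x)` and
`δ(y)`, lie in `closure G`, so `|x - y| + δ(x) + δ(y) ≤ diam G ≤ 2r`, the last step because
`√(n/(2n+2)) ≥ 1/2`. With `m = min δ(x) δ(y)` this gives `2m ≤ 2r - |x - y|`, hence
`1 + |x - y|/m ≥ (2r + |x - y|)/(2r - |x - y|) = (2 + t)/(2 - t)`. Since
`log((2 + t)/(2 - t)) = 2 artanh(t/2)`, the remaining inequalities are `s ≤ artanh s` and
monotonicity of `artanh`.
-/

open Real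

namespace Real

theorem log_two_add_div_two_sub {t : ℝ} (ht : |t| < 2) :
    log ((2 + t) / (2 - t)) = 2 * artanh (t / 2) := by
  obtain ⟨h₁, h₂⟩ := abs_lt.1 ht
  rw [artanh_eq_half_log ⟨by linarith, by linarith⟩]
  have : (1 + t / 2) / (1 - t / 2) = (2 + t) / (2 - t) := by
    field_simp
  rw [this]
  ring

theorem self_le_artanh {x : ℝ} (h₀ : 0 ≤ x) (h₁ : x < 1) : x ≤ artanh x := by
  have hx : |x| < 1 := by rwa [abs_of_nonneg h₀]
  have hsum := hasSum_log_sub_log_of_abs_lt_one hx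
  have hfirst : 2 * x ≤ log (1 + x) - log (1 - x) := by
    simpa using le_hasSum hsum 0 fun k _ => by positivity
  rw [artanh_eq_half_log ⟨by linarith, h₁.le⟩, log_div (by linarith) (by linarith)]
  linarith

theorem le_tanh_iff_artanh_le {x y : ℝ} (hx : x ∈ Ioo (-1) 1) :
    x ≤ tanh y ↔ artanh x ≤ y := by
  conv_rhs => rw [← artanh_tanh y]
  exact (artanh_le_artanh_iff hx ⟨neg_one_lt_tanh y, tanh_lt_one y⟩).symm

end Real

theorem log_two_add_div_two_sub_le_log_one_add_div {d m r : ℝ} (hd : 0 ≤ d) (hm : 0 < m)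
    (h : 2 * m + d ≤ 2 * r) :
    log ((2 + d / r) / (2 - d / r)) ≤ log (1 + d / m) := by
  have hr : 0 < r := by linarith
  have hdr : 0 < 2 * r - d := by linarith
  have hfrac : (2 + d / r) / (2 - d / r) = (2 * r + d) / (2 * r - d) := by
    field_simp
  rw [hfrac]
  apply log_le_log (by positivity)
  rw [one_add_div hm.ne', div_le_div_iff₀ hdr hm]
  nlinarith

theorem half_le_sqrt_div_two_mul_add_two {n : ℝ} (hn : 1 ≤ n) :
    1 / 2 ≤ √(n / (2 * n + 2)) := by
  rw [le_sqrt (by norm_num) (by positivity), le_div_iff₀ (by positivity)]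
  linarith

section Frontier

variable {E : Type*} [NormedAddCommGroup E] [NormedSpace ℝ E]

theorem infDist_frontier_pos {s : Set E} (hs : IsOpen s) (hs' : s ≠ univ) {x : E}
    (hx : x ∈ s) : 0 < infDist x (frontier s) := by
  have hne : (frontier s).Nonempty := nonempty_frontier_iff.2 ⟨⟨x, hx⟩, hs'⟩
  refine (isClosed_frontier.notMem_iff_infDist_pos hne).1 fun h => ?_
  rw [hs.frontier_eq] at h
  exact h.2 hx

theorem closedBall_infDist_frontier_subset_closure [FiniteDimensional ℝ E] {s : Set E}
    (hs : s ≠ univ) {x : E} (hx : x ∈ s) :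
    closedBall x (infDist x (frontier s)) ⊆ closure s := by
  obtain ⟨z, hz, hxz⟩ := exists_mem_frontier_infDist_compl_eq_dist hx hs
  have hle : infDist x (frontier s) ≤ infDist x sᶜ := hxz ▸ infDist_le_dist_of_mem hz
  exact (closedBall_subset_closedBall hle).trans (closedBall_infDist_compl_subset_closure hx)

theorem exists_mem_closedBall_dist_eq_dist_add_add {x y : E} (hxy : x ≠ y) {a b : ℝ}
    (ha : 0 ≤ a) (hb : 0 ≤ b) :
    ∃ u ∈ closedBall x a, ∃ v ∈ closedBall y b, dist u v = dist x y + a + b := by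
  have hd : 0 < dist x y := dist_pos.2 hxy
  set e : E := (dist x y)⁻¹ • (x - y)
  have he : ‖e‖ = 1 := by
    rw [norm_smul, norm_inv, ← dist_eq_norm, Real.norm_of_nonneg hd.le, inv_mul_cancel₀ hd.ne']
  refine ⟨x + a • e, ?_, y - b • e, ?_, ?_⟩
  · simp [norm_smul, he, abs_of_nonneg ha]
  · simp [norm_smul, he, abs_of_nonneg hb]
  · have hxy' : x - y = dist x y • e := by
      simp only [e, smul_smul, mul_inv_cancel₀ hd.ne', one_smul]
    have : x + a • e - (y - b • e) = (dist x y + a + b) • e :=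
      calc x + a • e - (y - b • e) = (x - y) + (a + b) • e := by module
        _ = (dist x y + a + b) • e := by rw [hxy']; module
    rw [dist_eq_norm, this, norm_smul, he, mul_one, Real.norm_of_nonneg (by positivity)]

theorem dist_add_infDist_frontier_add_infDist_frontier_le_diam [FiniteDimensional ℝ E]
    {s : Set E} (hb : Bornology.IsBounded s) (hs : s ≠ univ) {x y : E} (hx : x ∈ s)
    (hy : y ∈ s) (hxy : x ≠ y) :
    dist x y + infDist x (frontier s) + infDist y (frontier s) ≤ diam s := by
  obtain ⟨u, hu, v, hv, huv⟩ :=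
    exists_mem_closedBall_dist_eq_dist_add_add hxy (infDist_nonneg (x := x))
      (infDist_nonneg (x := y))
  rw [← huv, ← diam_closure]
  exact dist_le_diam_of_mem hb.closure (closedBall_infDist_frontier_subset_closure hs hx hu)
    (closedBall_infDist_frontier_subset_closure hs hy hv)

end Frontier

theorem stmt_11_general (n : ℕ) (G : Set (EuclideanSpace ℝ (Fin n)))
    (hGo : IsOpen G) (hGp : G ≠ Set.univ)
    (hGb : Bornology.IsBounded G)
    (r : ℝ) (hr : r = Real.sqrt ((n : ℝ) / (2 * n + 2)) * Metric.diam G)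
    (x y : EuclideanSpace ℝ (Fin n)) (hx : x ∈ G) (hy : y ∈ G) (hxy : x ≠ y)
    (t : ℝ) (ht : t = dist x y / r) :
    Real.log ((2 + t) / (2 - t)) ≤ jDist G x y ∧
    t ≤ Real.log ((2 + t) / (2 - t)) ∧
    dist x y ≤ 2 * r * Real.tanh (jDist G x y / 2) := by
  obtain rfl | hn := Nat.eq_zero_or_pos n
  · exact absurd (Subsingleton.elim x y) hxy
  have hd : 0 < dist x y := dist_pos.2 hxy
  have hm : 0 < min (bdist G x) (bdist G y) :=
    lt_min (infDist_frontier_pos hGo hGp hx) (infDist_frontier_pos hGo hGp hy)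
  have hsum : dist x y + bdist G x + bdist G y ≤ diam G :=
    dist_add_infDist_frontier_add_infDist_frontier_le_diam hGb hGp hx hy hxy
  have hdiam : diam G ≤ 2 * r := by
    have := half_le_sqrt_div_two_mul_add_two (n := n) (by exact_mod_cast hn)
    rw [hr]
    nlinarith [diam_nonneg (s := G)]
  have hkey : 2 * min (bdist G x) (bdist G y) + dist x y ≤ 2 * r := by
    linarith [min_le_left (bdist G x) (bdist G y), min_le_right (bdist G x) (bdist G y)]
  have hr0 : 0 < r := by linarith
  have ht0 : 0 ≤ t := ht ▸ by positivity
  have ht2 : t < 2 := by rw [ht, div_lt_iff₀ hr0]; linarith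
  have hlog : log ((2 + t) / (2 - t)) = 2 * artanh (t / 2) :=
    log_two_add_div_two_sub (abs_lt.2 ⟨by linarith, ht2⟩)
  have hj : log ((2 + t) / (2 - t)) ≤ jDist G x y :=
    ht ▸ log_two_add_div_two_sub_le_log_one_add_div hd.le hm hkey
  refine ⟨hj, ?_, ?_⟩
  · linarith [self_le_artanh (x := t / 2) (by linarith) (by linarith)]
  · have : t / 2 ≤ tanh (jDist G x y / 2) :=
      (le_tanh_iff_artanh_le ⟨by linarith, by linarith⟩).2 (by linarith)
    calc dist x y = 2 * r * (t / 2) := by rw [ht]; field_simp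
      _ ≤ 2 * r * tanh (jDist G x y / 2) := by gcongr

theorem stmt_11 (n : ℕ) (G : Set (EuclideanSpace ℝ (Fin n)))
    (hGo : IsOpen G) (hGc : IsConnected G) (hGp : G ≠ Set.univ)
    (hGb : Bornology.IsBounded G)
    (r : ℝ) (hr : r = Real.sqrt ((n : ℝ) / (2 * n + 2)) * Metric.diam G)
    (x y : EuclideanSpace ℝ (Fin n)) (hx : x ∈ G) (hy : y ∈ G) (hxy : x ≠ y)
    (t : ℝ) (ht : t = dist x y / r) :
    Real.log ((2 + t) / (2 - t)) ≤ jDist G x y ∧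
    t ≤ Real.log ((2 + t) / (2 - t)) ∧
    dist x y ≤ 2 * r * Real.tanh (jDist G x y / 2) :=
  stmt_11_general n G hGo hGp hGb r hr x y hx hy hxy t ht
end

section
/- Let G₁ = {(x,y) ∈ ℝ² : |x| + |y| < 1} and G₂ = {(x,y) ∈ ℝ² : x² + y² < 1}, so that G₁ ⊂ G₂. Then there is no constant c > 1 such that j_{G₁}(z₁, z₂) ≥ c · j_{G₂}(z₁, z₂) for all z₁, z₂ ∈ G₁; that is, for every c > 1 there exist distinct points z₁, z₂ ∈ G₁ with j_{G₁}(z₁, z₂) < c · j_{G₂}(z₁, z₂). -/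
open Set Metric

/-!
Take the points `(±t, 0)` with `t` close to `1`. Their distance to the unit circle is `1 - t`,
while their distance to the boundary of the square `|x| + |y| < 1` is at least `(1 - t) / 2`,
because `|x| + |y|` is `2`-Lipschitz. With `s = 2t / (1 - t)` this gives `j_{G₂} = log (1 + s)` and
`j_{G₁} ≤ log (1 + 2s) ≤ log 2 + log (1 + s)`, which is `< c · log (1 + s)` as soon as
`(c - 1) log (1 + s) > log 2`.
-/

open Real Filter NNReal

theorem le_infDist_frontier_setOf_lt {E : Type*} [PseudoMetricSpace E] {f : E → ℝ} {K : ℝ≥0}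
    (hf : LipschitzWith K f) {a : ℝ} (hne : (frontier {y | f y < a}).Nonempty) (x : E) :
    (a - f x) / K ≤ infDist x (frontier {y | f y < a}) := by
  refine (le_infDist hne).2 fun y hy => div_le_of_le_mul₀ K.2 dist_nonneg ?_
  have hya : f y = a := frontier_lt_subset_eq hf.continuous continuous_const hy
  calc a - f x = f y - f x := by rw [hya]
    _ ≤ dist (f y) (f x) := (le_abs_self _).trans_eq (Real.dist_eq _ _).symm
    _ ≤ K * dist y x := hf.dist_le_mul y x
    _ = dist x y * K := by rw [dist_comm, mul_comm]

theorem eventually_log_one_add_two_mul_lt {c : ℝ} (hc : 1 < c) :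
    ∀ᶠ s in atTop, log (1 + 2 * s) < c * log (1 + s) := by
  have h : Tendsto (fun s => (c - 1) * log (1 + s)) atTop atTop :=
    (tendsto_log_atTop.comp (tendsto_atTop_add_const_left _ 1 tendsto_id)).const_mul_atTop
      (sub_pos.2 hc)
  filter_upwards [h.eventually_gt_atTop (log 2), eventually_gt_atTop 0] with s hs hs0
  calc log (1 + 2 * s) ≤ log (2 * (1 + s)) := log_le_log (by linarith) (by linarith)
    _ = log 2 + log (1 + s) := log_mul two_ne_zero (by linarith)
    _ < c * log (1 + s) := by linarith

theorem jDist_le_log_of_le_min {n : ℕ} {G : Set (EuclideanSpace ℝ (Fin n))}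
    {x y : EuclideanSpace ℝ (Fin n)} {m : ℝ} (hm : 0 < m) (h : m ≤ min (bdist G x) (bdist G y)) :
    jDist G x y ≤ log (1 + dist x y / m) := by
  have hq : dist x y / min (bdist G x) (bdist G y) ≤ dist x y / m :=
    div_le_div_of_nonneg_left dist_nonneg hm h
  have hq0 : 0 ≤ dist x y / min (bdist G x) (bdist G y) :=
    div_nonneg dist_nonneg (hm.le.trans h)
  exact log_le_log (by linarith) (by linarith)

theorem dist_axis_neg (t : ℝ) :
    dist (!₂[t, 0] : EuclideanSpace ℝ (Fin 2)) !₂[-t, 0] = 2 * |t| := by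
  simp [EuclideanSpace.dist_eq, Real.dist_eq, Real.sqrt_sq_eq_abs, ← two_mul, abs_mul]

theorem norm_axis (t : ℝ) : ‖(!₂[t, 0] : EuclideanSpace ℝ (Fin 2))‖ = |t| := by
  simp [EuclideanSpace.norm_eq, Real.sqrt_sq_eq_abs]

theorem lipschitzWith_abs_add_abs :
    LipschitzWith 2 (fun p : EuclideanSpace ℝ (Fin 2) => |p 0| + |p 1|) := by
  have h : ∀ i : Fin 2, LipschitzWith 1 (fun p : EuclideanSpace ℝ (Fin 2) => |p i|) := fun i =>
    LipschitzWith.of_dist_le_mul fun p q => by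
      simpa [Real.dist_eq] using
        (abs_abs_sub_abs_le_abs_sub (p i) (q i)).trans (PiLp.dist_apply_le p q i)
  simpa [one_add_one_eq_two] using (h 0).add (h 1)

theorem nonempty_frontier_diamond :
    (frontier {p : EuclideanSpace ℝ (Fin 2) | |p 0| + |p 1| < 1}).Nonempty :=
  nonempty_frontier_iff.2 ⟨⟨0, by simp⟩, fun h => by simpa using h.ge (mem_univ !₂[(1 : ℝ), 0])⟩

theorem bdist_diamond_axis_ge (t : ℝ) :
    (1 - |t|) / 2 ≤ bdist {p : EuclideanSpace ℝ (Fin 2) | |p 0| + |p 1| < 1} !₂[t, 0] := by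
  simpa [bdist] using
    le_infDist_frontier_setOf_lt lipschitzWith_abs_add_abs nonempty_frontier_diamond !₂[t, 0]

theorem min_bdist_diamond_axis_ge {t : ℝ} (ht : 0 ≤ t) :
    (1 - t) / 2 ≤ min (bdist {p : EuclideanSpace ℝ (Fin 2) | |p 0| + |p 1| < 1} !₂[t, 0])
      (bdist {p : EuclideanSpace ℝ (Fin 2) | |p 0| + |p 1| < 1} !₂[-t, 0]) := by
  have h : ∀ u : ℝ, |u| = t → (1 - t) / 2 ≤ bdist _ !₂[u, 0] := fun u hu =>
    hu ▸ bdist_diamond_axis_ge u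
  exact le_min (h t (abs_of_nonneg ht)) (h (-t) (by rw [abs_neg, abs_of_nonneg ht]))

theorem bdist_ball_ge (x : EuclideanSpace ℝ (Fin 2)) : 1 - ‖x‖ ≤ bdist (ball 0 1) x := by
  have hball : ball (0 : EuclideanSpace ℝ (Fin 2)) 1 = {y | ‖y‖ < 1} := by ext; simp
  have hne : (frontier {y : EuclideanSpace ℝ (Fin 2) | ‖y‖ < 1}).Nonempty := by
    rw [← hball, frontier_ball 0 one_ne_zero]
    exact NormedSpace.sphere_nonempty.2 zero_le_one
  simpa [bdist, hball] using le_infDist_frontier_setOf_lt lipschitzWith_one_norm hne x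

theorem min_bdist_ball_axis {t : ℝ} (ht0 : 0 ≤ t) (ht1 : t ≤ 1) :
    min (bdist (ball 0 1) !₂[t, 0]) (bdist (ball 0 1) !₂[-t, 0]) = 1 - t := by
  have hlow : ∀ u : ℝ, |u| = t → 1 - t ≤ bdist (ball 0 1) !₂[u, 0] := fun u hu => by
    simpa [norm_axis, hu] using bdist_ball_ge !₂[u, 0]
  have hone : (!₂[(1 : ℝ), 0] : EuclideanSpace ℝ (Fin 2)) ∈ frontier (ball 0 1) := by
    simp [frontier_ball, norm_axis]
  have hup : bdist (ball 0 1) !₂[t, 0] ≤ 1 - t :=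
    calc bdist (ball 0 1) !₂[t, 0] ≤ dist (!₂[t, 0] : EuclideanSpace ℝ (Fin 2)) !₂[(1 : ℝ), 0] :=
          infDist_le_dist_of_mem hone
      _ = 1 - t := by
        simp [EuclideanSpace.dist_eq, Real.dist_eq, Real.sqrt_sq_eq_abs,
          abs_of_nonpos (sub_nonpos.2 ht1)]
  exact le_antisymm ((min_le_left _ _).trans hup)
    (le_min (hlow t (abs_of_nonneg ht0)) (hlow (-t) (by rw [abs_neg, abs_of_nonneg ht0])))

theorem stmt_13 (c : ℝ) (hc : 1 < c) :
    ∃ z₁ z₂ : EuclideanSpace ℝ (Fin 2),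
      z₁ ∈ {p : EuclideanSpace ℝ (Fin 2) | |p 0| + |p 1| < 1} ∧
      z₂ ∈ {p : EuclideanSpace ℝ (Fin 2) | |p 0| + |p 1| < 1} ∧
      z₁ ≠ z₂ ∧
      jDist {p : EuclideanSpace ℝ (Fin 2) | |p 0| + |p 1| < 1} z₁ z₂ <
        c * jDist (Metric.ball (0 : EuclideanSpace ℝ (Fin 2)) 1) z₁ z₂ := by
  obtain ⟨s, hs, hs0⟩ :=
    ((eventually_log_one_add_two_mul_lt hc).and (eventually_gt_atTop 0)).exists
  set t := s / (s + 2) with ht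
  have ht0 : 0 < t := by positivity
  have ht1 : t < 1 := (div_lt_one (by linarith)).2 (by linarith)
  have hst : 2 * t / (1 - t) = s := by rw [ht]; field_simp; ring
  have hdist : dist (!₂[t, 0] : EuclideanSpace ℝ (Fin 2)) !₂[-t, 0] = 2 * t := by
    rw [dist_axis_neg, abs_of_pos ht0]
  refine ⟨!₂[t, 0], !₂[-t, 0], by simpa [abs_of_pos ht0], by simpa [abs_of_pos ht0],
    dist_pos.1 (by rw [hdist]; positivity), ?_⟩
  calc _ ≤ log (1 + 2 * t / ((1 - t) / 2)) :=
        hdist ▸ jDist_le_log_of_le_min (by linarith) (min_bdist_diamond_axis_ge ht0.le)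
    _ = log (1 + 2 * s) := by rw [← hst]; congr 2; field_simp
    _ < c * log (1 + s) := hs
    _ = _ := by rw [jDist, min_bdist_ball_axis ht0.le ht1.le, hdist, hst]
end

section
/- Let G₁ = {(x,y) ∈ ℝ² : |x| + |y| < 1} and G₂ = {(x,y) ∈ ℝ² : x² + y² < 1}. Then for every w ∈ G₁, δ_{G₂}(w) ≥ √2 · δ_{G₁}(w). -/
open Set Metric

/-! Moving each coordinate of `w ∈ ℝⁿ` away from zero by `t = (1 - ‖w‖₁) / n` reaches the
boundary of the `ℓ¹` unit ball at Euclidean distance `√n · t`, so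
`√n · δ_{G₁}(w) ≤ 1 - ‖w‖₁ ≤ 1 - ‖w‖₂ = δ_{G₂}(w)`. -/

theorem infDist_frontier_le_dist_of_mem_of_notMem {E : Type*} [NormedAddCommGroup E]
    [NormedSpace ℝ E] [FiniteDimensional ℝ E] {s : Set E} {x y : E} (hx : x ∈ s) (hy : y ∉ s) :
    infDist x (frontier s) ≤ dist x y := by
  obtain ⟨z, hz, hxz⟩ :=
    exists_mem_frontier_infDist_compl_eq_dist hx ((ne_univ_iff_exists_notMem s).2 ⟨y, hy⟩)
  calc infDist x (frontier s) ≤ dist x z := infDist_le_dist_of_mem hz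
    _ = infDist x sᶜ := hxz.symm
    _ ≤ dist x y := infDist_le_dist_of_mem hy

theorem sub_dist_le_infDist_frontier_ball {E : Type*} [NormedAddCommGroup E] [NormedSpace ℝ E]
    [Nontrivial E] (c x : E) {r : ℝ} (hr : 0 < r) :
    r - dist x c ≤ infDist x (frontier (ball c r)) := by
  rw [frontier_ball c hr.ne', le_infDist (NormedSpace.sphere_nonempty.2 hr.le)]
  intro y hy
  linarith [dist_triangle y x c, dist_comm x y, mem_sphere.1 hy]

namespace EuclideanSpace

variable {ι : Type*} [Fintype ι]

theorem norm_le_sum_abs (x : EuclideanSpace ℝ ι) : ‖x‖ ≤ ∑ i, |x i| := by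
  rw [norm_eq, Real.sqrt_le_left (by positivity)]
  exact Finset.sum_sq_le_sq_sum_of_nonneg fun i _ => abs_nonneg (x i)

theorem norm_eq_sqrt_card_mul_of_abs_eq {x : EuclideanSpace ℝ ι} {t : ℝ} (ht : 0 ≤ t)
    (hx : ∀ i, |x i| = t) : ‖x‖ = √(Fintype.card ι) * t := by
  simp only [norm_eq, Real.norm_eq_abs, hx, Finset.sum_const, Finset.card_univ, nsmul_eq_mul]
  rw [Real.sqrt_mul (Nat.cast_nonneg _), Real.sqrt_sq ht]

end EuclideanSpace

theorem exists_abs_eq_and_abs_add_eq (a : ℝ) {t : ℝ} (ht : 0 ≤ t) :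
    ∃ c, |c| = t ∧ |a + c| = |a| + t := by
  rcases le_total 0 a with ha | ha
  · exact ⟨t, abs_of_nonneg ht, by rw [abs_of_nonneg ha, abs_of_nonneg (by linarith)]⟩
  · exact ⟨-t, by rw [abs_neg, abs_of_nonneg ht],
      by rw [abs_of_nonpos ha, abs_of_nonpos (by linarith)]; ring⟩

theorem sqrt_card_mul_infDist_frontier_l1Ball_le {ι : Type*} [Fintype ι] [Nonempty ι]
    (x : EuclideanSpace ℝ ι) (hx : ∑ i, |x i| < 1) :
    √(Fintype.card ι) * infDist x (frontier {p : EuclideanSpace ℝ ι | ∑ i, |p i| < 1}) ≤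
      1 - ∑ i, |x i| := by
  have hn : (0 : ℝ) < Fintype.card ι := Nat.cast_pos.2 Fintype.card_pos
  set t := (1 - ∑ i, |x i|) / Fintype.card ι
  have ht : 0 ≤ t := div_nonneg (by linarith) hn.le
  have hnt : Fintype.card ι * t = 1 - ∑ i, |x i| := mul_div_cancel₀ _ hn.ne'
  choose c hc hxc using fun i => exists_abs_eq_and_abs_add_eq (x i) ht
  have hy : x + WithLp.toLp 2 c ∉ {p : EuclideanSpace ℝ ι | ∑ i, |p i| < 1} := by
    have : ∑ i, |x i + c i| = 1 := by
      simp only [hxc, Finset.sum_add_distrib, Finset.sum_const, Finset.card_univ, nsmul_eq_mul]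
      linarith
    simp [this]
  have hdist : dist x (x + WithLp.toLp 2 c) = √(Fintype.card ι) * t := by
    rw [dist_self_add_right]
    exact EuclideanSpace.norm_eq_sqrt_card_mul_of_abs_eq ht hc
  calc √(Fintype.card ι) * infDist x _ ≤ √(Fintype.card ι) * (√(Fintype.card ι) * t) := by
        gcongr; exact hdist ▸ infDist_frontier_le_dist_of_mem_of_notMem hx hy
    _ = 1 - ∑ i, |x i| := by rw [← mul_assoc, Real.mul_self_sqrt hn.le, hnt]

theorem stmt_18 (w : EuclideanSpace ℝ (Fin 2))
    (hw : w ∈ {p : EuclideanSpace ℝ (Fin 2) | |p 0| + |p 1| < 1}) :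
    Real.sqrt 2 * bdist {p : EuclideanSpace ℝ (Fin 2) | |p 0| + |p 1| < 1} w ≤
      bdist (Metric.ball (0 : EuclideanSpace ℝ (Fin 2)) 1) w := by
  have hl1 : {p : EuclideanSpace ℝ (Fin 2) | |p 0| + |p 1| < 1} = {p | ∑ i, |p i| < 1} := by
    simp only [Fin.sum_univ_two]
  have hw' : ∑ i, |w i| < 1 := by rwa [hl1] at hw
  calc √2 * bdist {p : EuclideanSpace ℝ (Fin 2) | |p 0| + |p 1| < 1} w
      = √(Fintype.card (Fin 2)) * infDist w (frontier {p | ∑ i, |p i| < 1}) := by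
        rw [bdist, hl1, Fintype.card_fin, Nat.cast_ofNat]
    _ ≤ 1 - ∑ i, |w i| := sqrt_card_mul_infDist_frontier_l1Ball_le w hw'
    _ ≤ 1 - dist w 0 := by
        rw [dist_zero_right]; linarith [EuclideanSpace.norm_le_sum_abs w]
    _ ≤ bdist (ball 0 1) w := sub_dist_le_infDist_frontier_ball 0 w one_pos
end

section
/- Let 0 < s < 1, let G₁ = {(x,y) ∈ ℝ² : |x|^s + |y|^s < 1} and G₂ = {(x,y) ∈ ℝ² : |x| + |y| < 1}. Then for every w ∈ G₁, δ_{G₂}(w) ≥ 2^{1/s − 1} · δ_{G₁}(w). -/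
open Set Metric

/-!
Write `a = |w 0|`, `b = |w 1|` and `t = 1 - (a + b)`; since `u ≤ u ^ s` on `[0, 1]`, `G₁ ⊆ G₂`
and `t > 0`. The ℓ¹-norm is at most `√2` times the Euclidean norm, so every point outside `G₂`
is at distance at least `t / √2` from `w`. On the other hand, moving both coordinates of `w`
away from the axes by `h = 2 ^ (-1/s) * t` leaves `G₁`: concavity of `u ↦ u ^ s` on the chord
from `a` to `1` gives `(a + h) ^ s ≥ a + t / 2`, likewise for `b`, and these add up to `1`.
Hence `δ_{G₁}(w) ≤ √2 h`, and `2 ^ (1/s - 1) * √2 h = t / √2`. In finite dimensions, the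
distance from a point of a set to its frontier is its distance to the complement.
-/

theorem Metric.infDist_frontier_eq_infDist_compl {E : Type*} [NormedAddCommGroup E]
    [NormedSpace ℝ E] [FiniteDimensional ℝ E] {x : E} {s : Set E} (hx : x ∈ s)
    (hs : s ≠ univ) : infDist x (frontier s) = infDist x sᶜ := by
  obtain ⟨y, hy, hxy⟩ := exists_mem_frontier_infDist_compl_eq_dist hx hs
  refine le_antisymm ((infDist_le_dist_of_mem hy).trans_eq hxy.symm) ?_
  rw [← infDist_closure (s := sᶜ)]
  exact infDist_le_infDist_of_subset (frontier_compl s ▸ frontier_subset_closure) ⟨y, hy⟩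

theorem EuclideanSpace.sum_abs_le_sqrt_card_mul_norm {n : ℕ} (p : EuclideanSpace ℝ (Fin n)) :
    ∑ i, |p i| ≤ √n * ‖p‖ := by
  simpa [EuclideanSpace.norm_eq] using Real.sum_mul_le_sqrt_mul_sqrt Finset.univ 1 fun i => |p i|

noncomputable def outwardShift {n : ℕ} (h : ℝ) (w : EuclideanSpace ℝ (Fin n)) :
    EuclideanSpace ℝ (Fin n) :=
  WithLp.toLp 2 fun i => w i + if 0 ≤ w i then h else -h

section outwardShift

variable {n : ℕ} {h : ℝ} (w : EuclideanSpace ℝ (Fin n))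

theorem abs_outwardShift_apply (hh : 0 ≤ h) (i : Fin n) :
    |outwardShift h w i| = |w i| + h := by
  simp only [outwardShift]
  split_ifs with hw
  · rw [abs_of_nonneg hw, abs_of_nonneg (by linarith)]
  · rw [abs_of_neg (not_le.1 hw), abs_of_neg (by linarith)]
    ring

theorem dist_outwardShift (hh : 0 ≤ h) : dist w (outwardShift h w) = √n * h := by
  have hcoord (i : Fin n) : dist (w i) (outwardShift h w i) = h := by
    simp only [outwardShift, Real.dist_eq]
    split_ifs <;> simp [abs_of_nonneg hh]
  simp [EuclideanSpace.dist_eq, hcoord, Real.sqrt_sq hh]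

end outwardShift

theorem add_rpow_mul_le_rpow_add {s c a d : ℝ} (hs0 : 0 ≤ s) (hs1 : s ≤ 1) (hc : 0 ≤ c)
    (ha : 0 ≤ a) (hd : 0 ≤ d) (had : a + d ≤ 1) :
    a + c ^ s * d ≤ (a + c * d) ^ s := by
  rcases (show a ≤ 1 by linarith).lt_or_eq with ha1 | rfl
  swap
  · obtain rfl : d = 0 := by linarith
    simp
  replace ha1 : 0 < 1 - a := by linarith
  set r := d / (1 - a)
  have hr0 : 0 ≤ r := by positivity
  have hr1 : r ≤ 1 := div_le_one_of_le₀ (by linarith) ha1.le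
  have hd_eq : d = (1 - a) * r := (mul_div_cancel₀ d ha1.ne').symm
  have hconc := (Real.concaveOn_rpow hs0 hs1).2 (mem_Ici.2 zero_le_one)
    (mem_Ici.2 (mul_nonneg hc hr0)) ha ha1.le (add_sub_cancel a 1)
  calc a + c ^ s * d = a * 1 + (1 - a) * (c ^ s * r) := by rw [hd_eq]; ring
    _ ≤ a * 1 ^ s + (1 - a) * (c * r) ^ s := by
      rw [Real.one_rpow, Real.mul_rpow hc hr0]
      gcongr
      exact Real.self_le_rpow_of_le_one hr0 hr1 hs1
    _ ≤ (a * 1 + (1 - a) * (c * r)) ^ s := hconc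
    _ = (a + c * d) ^ s := by rw [hd_eq]; ring_nf

theorem one_le_rpow_add_rpow_of_shift {s a b : ℝ} (hs0 : 0 < s) (hs1 : s ≤ 1) (ha : 0 ≤ a)
    (hb : 0 ≤ b) (hab : a + b ≤ 1) :
    1 ≤ (a + (2 : ℝ) ^ (-(1 / s)) * (1 - (a + b))) ^ s
      + (b + (2 : ℝ) ^ (-(1 / s)) * (1 - (a + b))) ^ s := by
  have hc : ((2 : ℝ) ^ (-(1 / s))) ^ s = 1 / 2 := by
    rw [← Real.rpow_mul zero_le_two, neg_mul, one_div_mul_cancel hs0.ne', Real.rpow_neg_one,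
      one_div]
  have hd : 0 ≤ 1 - (a + b) := sub_nonneg.2 hab
  have h2 : (0 : ℝ) ≤ 2 ^ (-(1 / s)) := by positivity
  have hA := add_rpow_mul_le_rpow_add hs0.le hs1 h2 ha hd (by linarith)
  have hB := add_rpow_mul_le_rpow_add hs0.le hs1 h2 hb hd (by linarith)
  rw [hc] at hA hB
  linarith

theorem add_lt_one_of_rpow_add_rpow_lt_one {s a b : ℝ} (hs0 : 0 < s) (hs1 : s ≤ 1) (ha : 0 ≤ a)
    (hb : 0 ≤ b) (h : a ^ s + b ^ s < 1) : a + b < 1 := by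
  have hle_rpow {x : ℝ} (hx : 0 ≤ x) (hxs : x ^ s < 1) : x ≤ x ^ s :=
    Real.self_le_rpow_of_le_one hx ((Real.rpow_lt_one_iff' hx hs0).1 hxs).le hs1
  have has := Real.rpow_nonneg ha s
  have hbs := Real.rpow_nonneg hb s
  linarith [hle_rpow ha (by linarith), hle_rpow hb (by linarith)]

theorem div_sqrt_two_le_bdist_of_abs_add_abs_lt_one {w : EuclideanSpace ℝ (Fin 2)}
    (hw : w ∈ {p : EuclideanSpace ℝ (Fin 2) | |p 0| + |p 1| < 1}) :
    (1 - (|w 0| + |w 1|)) / √2 ≤ bdist {p : EuclideanSpace ℝ (Fin 2) | |p 0| + |p 1| < 1} w := by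
  have hout : outwardShift 1 w ∉ {p : EuclideanSpace ℝ (Fin 2) | |p 0| + |p 1| < 1} := by
    simp only [mem_ofPred_eq, abs_outwardShift_apply w zero_le_one, not_lt]
    linarith [abs_nonneg (w 0), abs_nonneg (w 1)]
  rw [bdist, infDist_frontier_eq_infDist_compl hw (ne_univ_iff_exists_notMem _ |>.2 ⟨_, hout⟩)]
  refine (le_infDist ⟨_, hout⟩).2 fun y hy => ?_
  have hy : 1 ≤ |y 0| + |y 1| := not_lt.1 hy
  have hl1 := EuclideanSpace.sum_abs_le_sqrt_card_mul_norm (w - y)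
  simp only [Fin.sum_univ_two, PiLp.sub_apply, Nat.cast_ofNat] at hl1
  rw [div_le_iff₀ (by positivity), dist_eq_norm]
  linarith [abs_sub_abs_le_abs_sub (y 0) (w 0), abs_sub_abs_le_abs_sub (y 1) (w 1),
    abs_sub_comm (y 0) (w 0), abs_sub_comm (y 1) (w 1)]

theorem bdist_le_of_rpow_add_rpow_lt_one {s : ℝ} (hs0 : 0 < s) (hs1 : s ≤ 1)
    {w : EuclideanSpace ℝ (Fin 2)}
    (hw : w ∈ {p : EuclideanSpace ℝ (Fin 2) | |p 0| ^ s + |p 1| ^ s < 1}) :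
    bdist {p : EuclideanSpace ℝ (Fin 2) | |p 0| ^ s + |p 1| ^ s < 1} w ≤
      √2 * ((2 : ℝ) ^ (-(1 / s)) * (1 - (|w 0| + |w 1|))) := by
  have hab := add_lt_one_of_rpow_add_rpow_lt_one hs0 hs1 (abs_nonneg _) (abs_nonneg _) hw
  have hh : 0 ≤ (2 : ℝ) ^ (-(1 / s)) * (1 - (|w 0| + |w 1|)) :=
    mul_nonneg (by positivity) (by linarith)
  have hout : outwardShift ((2 : ℝ) ^ (-(1 / s)) * (1 - (|w 0| + |w 1|))) w ∉
      {p : EuclideanSpace ℝ (Fin 2) | |p 0| ^ s + |p 1| ^ s < 1} := by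
    simp only [mem_ofPred_eq, abs_outwardShift_apply w hh, not_lt]
    exact one_le_rpow_add_rpow_of_shift hs0 hs1 (abs_nonneg _) (abs_nonneg _) hab.le
  rw [bdist, infDist_frontier_eq_infDist_compl hw (ne_univ_iff_exists_notMem _ |>.2 ⟨_, hout⟩)]
  exact (infDist_le_dist_of_mem hout).trans_eq (by simpa using dist_outwardShift w hh)

theorem stmt_19 (s : ℝ) (hs0 : 0 < s) (hs1 : s < 1)
    (w : EuclideanSpace ℝ (Fin 2))
    (hw : w ∈ {p : EuclideanSpace ℝ (Fin 2) | |p 0| ^ s + |p 1| ^ s < 1}) :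
    (2 : ℝ) ^ (1 / s - 1) *
        bdist {p : EuclideanSpace ℝ (Fin 2) | |p 0| ^ s + |p 1| ^ s < 1} w ≤
      bdist {p : EuclideanSpace ℝ (Fin 2) | |p 0| + |p 1| < 1} w := by
  have hab := add_lt_one_of_rpow_add_rpow_lt_one hs0 hs1.le (abs_nonneg _) (abs_nonneg _) hw
  set t := 1 - (|w 0| + |w 1|)
  have hconst : (2 : ℝ) ^ (1 / s - 1) * (√2 * (2 ^ (-(1 / s)) * t)) = t / √2 := by
    have h2 : (2 : ℝ) ^ (1 / s - 1) * 2 ^ (-(1 / s)) = 2⁻¹ := by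
      rw [← Real.rpow_add two_pos, show 1 / s - 1 + -(1 / s) = -1 by ring, Real.rpow_neg_one]
    rw [eq_div_iff (by positivity)]
    calc _ = ((2 : ℝ) ^ (1 / s - 1) * 2 ^ (-(1 / s))) * (√2 * √2) * t := by ring
      _ = t := by rw [h2, Real.mul_self_sqrt zero_le_two]; ring
  calc (2 : ℝ) ^ (1 / s - 1) * bdist {p | |p 0| ^ s + |p 1| ^ s < 1} w
      ≤ 2 ^ (1 / s - 1) * (√2 * (2 ^ (-(1 / s)) * t)) := by
        gcongr
        exact bdist_le_of_rpow_add_rpow_lt_one hs0 hs1.le hw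
    _ = t / √2 := hconst
    _ ≤ bdist {p | |p 0| + |p 1| < 1} w := div_sqrt_two_le_bdist_of_abs_add_abs_lt_one hab
end
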